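/- arXiv:1510.00586 — 7 statements merged into one kernel-verified Lean document; each statement's English description precedes it below -/
import Mathlib

section
/- Let G be a graph and let A ⊆ B be sets of vertices of G with A finite. If A is self-sufficient in B and X ⊆ B, then A ∩ X is self-sufficient in X. -/
open scoped Cardinal

/-- Number of edges of the graph `G` with both endpoints in `A`
(ordered pairs counted and divided by two). -/
noncomputable def edgeCount {V : Type*} (G : SimpleGraph V) (A : Set V) : ℕ :=
  {p : V × V | p.1 ∈ A ∧ p.2 ∈ A ∧ G.Adj p.1 p.2}.ncard / 2

/-- The pre-dimension `δ(A) = m·|A| − e(A)`. -/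
noncomputable def delta {V : Type*} (m : ℕ) (G : SimpleGraph V) (A : Set V) : ℤ :=
  (m : ℤ) * A.ncard - edgeCount G A

/-- `A` is self-sufficient (`≤`-closed) in `B`:  `A ⊆ B` and `δ(A') ≥ δ(A)` for
every finite `A'` with `A ⊆ A' ⊆ B`. -/
def SelfSuff {V : Type*} (m : ℕ) (G : SimpleGraph V) (A B : Set V) : Prop :=
  A ⊆ B ∧ ∀ A' : Set V, A'.Finite → A ⊆ A' → A' ⊆ B → delta m G A ≤ delta m G A'

/-- A graph belongs to the class `K₀` if `δ(A') ≥ 0` for every set `A'` of its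
vertices (used for finite graphs). -/
def InK0 {V : Type*} (m : ℕ) (G : SimpleGraph V) : Prop :=
  ∀ A : Set V, 0 ≤ delta m G A

/-- `G` is a `(K₀,≤)`-generic graph: (i) it is the union of an increasing chain of
finite self-sufficient subsets; (ii) every isomorphism between finite self-sufficient
induced subgraphs extends to an automorphism; (iii) every finite graph in `K₀` is
isomorphic to the induced subgraph on some finite self-sufficient subset. -/
def IsGeneric (m : ℕ) {V : Type} (G : SimpleGraph V) : Prop :=
  (∃ F : ℕ → Set V, (∀ n, (F n).Finite) ∧ (∀ n, F n ⊆ F (n + 1)) ∧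
      (∀ n, SelfSuff m G (F n) Set.univ) ∧ (⋃ n, F n) = Set.univ) ∧
  (∀ A B : Set V, A.Finite → B.Finite → SelfSuff m G A Set.univ → SelfSuff m G B Set.univ →
      ∀ e : G.induce A ≃g G.induce B, ∃ g : G ≃g G, ∀ a : A, g a = (e a : V)) ∧
  (∀ (W : Type) (_ : Fintype W) (H : SimpleGraph W), InK0 m H →
      ∃ s : Set V, s.Finite ∧ SelfSuff m G s Set.univ ∧ Nonempty (H ≃g G.induce s))

/-- The self-sufficient closure `cl(A)`: the intersection of all finite
self-sufficient subsets of the ambient graph containing `A` (which is the smallest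
such set whenever a smallest one exists). -/
def scl {V : Type*} (m : ℕ) (G : SimpleGraph V) (A : Set V) : Set V :=
  ⋂₀ {B : Set V | A ⊆ B ∧ B.Finite ∧ SelfSuff m G B Set.univ}

/-- The dimension `d(A) = δ(cl(A))`. -/
noncomputable def gdim {V : Type*} (m : ℕ) (G : SimpleGraph V) (A : Set V) : ℤ :=
  delta m G (scl m G A)

/-- The geometric closure
`gcl(X) = { v : d(A ∪ {v}) = d(A) for some finite A ⊆ X }`. -/
def gcl {V : Type*} (m : ℕ) (G : SimpleGraph V) (X : Set V) : Set V :=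
  {v | ∃ A : Set V, A ⊆ X ∧ A.Finite ∧ gdim m G (A ∪ {v}) = gdim m G A}

/-- The pointwise stabilizer `Aut_A(M)` of a set `A` of vertices, as a subgroup of
the automorphism group. -/
def pointStab {V : Type*} (G : SimpleGraph V) (A : Set V) : Subgroup (G ≃g G) where
  carrier := {g | ∀ a ∈ A, g a = a}
  one_mem' := fun a _ => rfl
  mul_mem' := by
    intro g h hg hh a ha
    show g (h a) = a
    rw [hh a ha, hg a ha]
  inv_mem' := by
    intro g hg a ha
    show g⁻¹ a = a
    conv_lhs => rw [← hg a ha]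
    simp

/-- The setwise stabilizer `Aut_{{X}}(M) = { g : g[X] = X }` of a set `X` of
vertices, as a subgroup of the automorphism group. -/
def setStab {V : Type*} (G : SimpleGraph V) (X : Set V) : Subgroup (G ≃g G) where
  carrier := {g | (fun v => g v) '' X = X}
  one_mem' := by simp
  mul_mem' := by
    intro g h hg hh
    show (fun v => g (h v)) '' X = X
    rw [show (fun v => g (h v)) = (fun v => g v) ∘ (fun v => h v) from rfl,
      Set.image_comp, hh, hg]
  inv_mem' := by
    intro g hg
    show (fun v => g⁻¹ v) '' X = X
    conv_lhs => rw [← hg]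
    rw [← Set.image_comp]
    have : (fun v => g⁻¹ v) ∘ (fun v => g v) = id := by
      funext v
      show g⁻¹ (g v) = v
      simp
    rw [this, Set.image_id]

/-- The topology of pointwise convergence on the automorphism group of a graph
(the vertex set being discrete). -/
def autTop (V : Type*) (G : SimpleGraph V) : TopologicalSpace (G ≃g G) :=
  TopologicalSpace.induced (fun g => (g : V → V))
    (@Pi.topologicalSpace V (fun _ => V) (fun _ => ⊥))


private lemma even_ncard_aux {α : Type*} :
    ∀ n (s : Set (α × α)), s.Finite → s.ncard = n →
      (∀ p ∈ s, Prod.swap p ∈ s) → (∀ p ∈ s, p.1 ≠ p.2) → Even n := by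
  intro n
  induction n using Nat.strong_induction_on with
  | _ n ih =>
    intro s hfin hcard hswap hnd
    rcases Nat.eq_zero_or_pos n with h0 | hpos
    · simp [h0]
    · have hne : s.Nonempty := by
        rw [Set.nonempty_iff_ne_empty]
        rintro rfl; simp [Set.ncard_empty] at hcard; omega
      obtain ⟨p, hp⟩ := hne
      have hsp : Prod.swap p ∈ s := hswap p hp
      have hpne : p ≠ Prod.swap p := by
        intro h
        exact hnd p hp (by rw [Prod.ext_iff] at h; exact h.1.trans rfl ▸ h.1)
      set t : Set (α × α) := s \ {p, Prod.swap p} with ht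
      have hsub : ({p, Prod.swap p} : Set (α × α)) ⊆ s := by
        intro q hq; rcases hq with rfl | hq
        · exact hp
        · simp only [Set.mem_singleton_iff] at hq; subst hq; exact hsp
      have hpair : ({p, Prod.swap p} : Set (α × α)).ncard = 2 :=
        Set.ncard_pair hpne
      have htcard : t.ncard = n - 2 := by
        rw [ht, Set.ncard_diff hsub ((hfin.subset hsub)), hpair, hcard]
      have hn2 : 2 ≤ n := by
        rw [← hcard, ← hpair]
        exact Set.ncard_le_ncard hsub hfin
      have htswap : ∀ q ∈ t, Prod.swap q ∈ t := by
        rintro q ⟨hqs, hqn⟩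
        refine ⟨hswap q hqs, ?_⟩
        intro hmem
        apply hqn
        rcases hmem with h | h
        · right; rw [← h]; simp
        · left
          simp only [Set.mem_singleton_iff] at h
          have := congrArg Prod.swap h; simpa using this
      obtain ⟨k, hk⟩ : Even (n - 2) :=
        ih (n - 2) (by omega) t (hfin.subset Set.diff_subset) htcard htswap
          (fun q hq => hnd q hq.1)
      exact ⟨k + 1, by omega⟩

private lemma even_pairs {V : Type*} (G : SimpleGraph V) (S : Set V)
    (hS : ({p : V × V | p.1 ∈ S ∧ p.2 ∈ S ∧ G.Adj p.1 p.2}).Finite) :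
    Even ({p : V × V | p.1 ∈ S ∧ p.2 ∈ S ∧ G.Adj p.1 p.2}).ncard := by
  refine even_ncard_aux _ _ hS rfl ?_ ?_
  · rintro ⟨a, b⟩ ⟨h1, h2, h3⟩; exact ⟨h2, h1, h3.symm⟩
  · rintro ⟨a, b⟩ ⟨_, _, h3⟩; exact G.ne_of_adj h3

private lemma pairs_finite {V : Type*} (G : SimpleGraph V) {S : Set V} (hS : S.Finite) :
    ({p : V × V | p.1 ∈ S ∧ p.2 ∈ S ∧ G.Adj p.1 p.2}).Finite :=
  (hS.prod hS).subset (fun p hp => ⟨hp.1, hp.2.1⟩)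

private lemma edgeCount_submod {V : Type*} (G : SimpleGraph V) {S T : Set V}
    (hS : S.Finite) (hT : T.Finite) :
    edgeCount G S + edgeCount G T ≤ edgeCount G (S ∪ T) + edgeCount G (S ∩ T) := by
  set PS := {p : V × V | p.1 ∈ S ∧ p.2 ∈ S ∧ G.Adj p.1 p.2}
  set PT := {p : V × V | p.1 ∈ T ∧ p.2 ∈ T ∧ G.Adj p.1 p.2}
  set PU := {p : V × V | p.1 ∈ S ∪ T ∧ p.2 ∈ S ∪ T ∧ G.Adj p.1 p.2}
  set PI := {p : V × V | p.1 ∈ S ∩ T ∧ p.2 ∈ S ∩ T ∧ G.Adj p.1 p.2}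
  have hfS := pairs_finite G hS
  have hfT := pairs_finite G hT
  have hfU := pairs_finite G (hS.union hT)
  have hfI := pairs_finite G (hS.inter_of_left T)
  have hsub : PS ∪ PT ⊆ PU := by
    rintro p (⟨h1, h2, h3⟩ | ⟨h1, h2, h3⟩)
    · exact ⟨Or.inl h1, Or.inl h2, h3⟩
    · exact ⟨Or.inr h1, Or.inr h2, h3⟩
  have hint : PS ∩ PT = PI := by
    ext p
    constructor
    · rintro ⟨⟨h1, h2, h3⟩, ⟨h4, h5, _⟩⟩; exact ⟨⟨h1, h4⟩, ⟨h2, h5⟩, h3⟩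
    · rintro ⟨⟨h1, h4⟩, ⟨h2, h5⟩, h3⟩; exact ⟨⟨h1, h2, h3⟩, ⟨h4, h5, h3⟩⟩
  have key : PS.ncard + PT.ncard ≤ PU.ncard + PI.ncard := by
    rw [← Set.ncard_union_add_ncard_inter PS PT hfS hfT, hint]
    exact Nat.add_le_add_right (Set.ncard_le_ncard hsub hfU) _
  obtain ⟨a, ha⟩ : Even PS.ncard := even_pairs G S hfS
  obtain ⟨b, hb⟩ : Even PT.ncard := even_pairs G T hfT
  obtain ⟨c, hc⟩ : Even PU.ncard := even_pairs G (S ∪ T) hfU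
  obtain ⟨d, hd⟩ : Even PI.ncard := even_pairs G (S ∩ T) hfI
  show PS.ncard / 2 + PT.ncard / 2 ≤ PU.ncard / 2 + PI.ncard / 2
  omega

private lemma delta_submod {V : Type*} (m : ℕ) (G : SimpleGraph V) {S T : Set V}
    (hS : S.Finite) (hT : T.Finite) :
    delta m G (S ∪ T) + delta m G (S ∩ T) ≤ delta m G S + delta m G T := by
  unfold delta
  have hcard : (S ∪ T).ncard + (S ∩ T).ncard = S.ncard + T.ncard :=
    Set.ncard_union_add_ncard_inter S T hS hT
  have hedge := edgeCount_submod G hS hT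
  have hcard' : ((S ∪ T).ncard : ℤ) + (S ∩ T).ncard = S.ncard + T.ncard := by
    exact_mod_cast hcard
  have hedge' : (edgeCount G S : ℤ) + edgeCount G T ≤
      edgeCount G (S ∪ T) + edgeCount G (S ∩ T) := by exact_mod_cast hedge
  nlinarith [hcard', hedge']

/-- If `A ⊆ B`, `A` is finite and self-sufficient in `B`, and `X ⊆ B`,
then `A ∩ X` is self-sufficient in `X`. -/
theorem selfSuff_inter {V : Type*} (m : ℕ) (hm : 2 ≤ m) (G : SimpleGraph V)
    (A B X : Set V) (hA : A.Finite) (hAB : A ⊆ B)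
    (hss : SelfSuff m G A B) (hX : X ⊆ B) :
    SelfSuff m G (A ∩ X) X := by
  refine ⟨Set.inter_subset_right, ?_⟩
  intro A' hfin hsub hsubX
  have hAA' : A ∩ A' = A ∩ X := by
    apply Set.Subset.antisymm
    · exact Set.inter_subset_inter_right A hsubX
    · exact fun a ha => ⟨ha.1, hsub ha⟩
  have h1 : delta m G A ≤ delta m G (A ∪ A') :=
    hss.2 (A ∪ A') (hA.union hfin) Set.subset_union_left
      (Set.union_subset hAB (hsubX.trans hX))
  have h2 : delta m G (A ∪ A') + delta m G (A ∩ A') ≤ delta m G A + delta m G A' :=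
    delta_submod m G hA hfin
  rw [hAA'] at h2
  linarith
end

section
/- Let G be a graph and let A ⊆ B ⊆ C be sets of vertices of G with A and B finite. If A is self-sufficient in B and B is self-sufficient in C, then A is self-sufficient in C. -/
open scoped Cardinal

private lemma even_card_invol_aux {α : Type*} [DecidableEq α] (f : α → α)
    (hf : ∀ a, f (f a) = a) :
    ∀ n (S : Finset α), S.card = n → (∀ a ∈ S, f a ∈ S) → (∀ a ∈ S, f a ≠ a) →
      Even S.card := by
  intro n
  induction n using Nat.strong_induction_on with
  | _ n ih =>
    intro S hn hS hne
    rcases S.eq_empty_or_nonempty with rfl | ⟨a, ha⟩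
    · simp
    · have hfa : f a ∈ S := hS a ha
      set T := S \ {a, f a} with hT
      have hpair : ({a, f a} : Finset α) ⊆ S := by
        intro x hx
        simp only [Finset.mem_insert, Finset.mem_singleton] at hx
        rcases hx with rfl | rfl
        · exact ha
        · exact hfa
      have hcardpair : ({a, f a} : Finset α).card = 2 :=
        Finset.card_pair (Ne.symm (hne a ha))
      have hTcard : T.card = S.card - 2 := by
        rw [hT, Finset.card_sdiff_of_subset hpair, hcardpair]
      have h2le : 2 ≤ S.card := by
        calc 2 = ({a, f a} : Finset α).card := hcardpair.symm
        _ ≤ S.card := Finset.card_le_card hpair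
      have hTclosed : ∀ x ∈ T, f x ∈ T := by
        intro x hx
        simp only [hT, Finset.mem_sdiff, Finset.mem_insert, Finset.mem_singleton] at hx ⊢
        obtain ⟨hxS, hx1⟩ := hx
        push_neg at hx1
        refine ⟨hS x hxS, ?_⟩
        rintro (h | h)
        · apply hx1.2; rw [← h, hf]
        · apply hx1.1
          have := congrArg f h
          rwa [hf, hf] at this
      have hTne : ∀ x ∈ T, f x ≠ x := fun x hx =>
        hne x (Finset.mem_sdiff.mp hx).1
      have hTeven : Even T.card := ih T.card (by omega) T rfl hTclosed hTne
      obtain ⟨k, hk⟩ := hTeven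
      exact ⟨k + 1, by omega⟩

private lemma pairSet_finite {V : Type*} (G : SimpleGraph V) {X : Set V} (hX : X.Finite) :
    {p : V × V | p.1 ∈ X ∧ p.2 ∈ X ∧ G.Adj p.1 p.2}.Finite :=
  (hX.prod hX).subset (fun p hp => ⟨hp.1, hp.2.1⟩)

private lemma even_pairSet_ncard {V : Type*} (G : SimpleGraph V) {X : Set V} (hX : X.Finite) :
    Even {p : V × V | p.1 ∈ X ∧ p.2 ∈ X ∧ G.Adj p.1 p.2}.ncard := by
  classical
  have hfin := pairSet_finite G hX
  rw [Set.ncard_eq_toFinset_card _ hfin]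
  refine even_card_invol_aux Prod.swap (fun p => Prod.swap_swap p) _ _ rfl ?_ ?_
  · intro p hp
    simp only [Set.Finite.mem_toFinset, Set.mem_setOf_eq] at hp ⊢
    exact ⟨hp.2.1, hp.1, hp.2.2.symm⟩
  · intro p hp h
    simp only [Set.Finite.mem_toFinset, Set.mem_setOf_eq] at hp
    have h1 : p.2 = p.1 := congrArg Prod.fst h
    exact hp.2.2.ne h1.symm

private lemma edgeCount_submod_s2 {V : Type*} (G : SimpleGraph V) {X Y : Set V}
    (hX : X.Finite) (hY : Y.Finite) :
    edgeCount G X + edgeCount G Y ≤ edgeCount G (X ∪ Y) + edgeCount G (X ∩ Y) := by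
  set PX := {p : V × V | p.1 ∈ X ∧ p.2 ∈ X ∧ G.Adj p.1 p.2} with hPX
  set PY := {p : V × V | p.1 ∈ Y ∧ p.2 ∈ Y ∧ G.Adj p.1 p.2} with hPY
  set PU := {p : V × V | p.1 ∈ X ∪ Y ∧ p.2 ∈ X ∪ Y ∧ G.Adj p.1 p.2} with hPU
  set PI := {p : V × V | p.1 ∈ X ∩ Y ∧ p.2 ∈ X ∩ Y ∧ G.Adj p.1 p.2} with hPI
  have hPXf : PX.Finite := pairSet_finite G hX
  have hPYf : PY.Finite := pairSet_finite G hY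
  have hPUf : PU.Finite := pairSet_finite G (hX.union hY)
  have hPIf : PI.Finite := pairSet_finite G (hX.inter_of_left Y)
  have hinter : PX ∩ PY = PI := by
    ext p
    simp only [hPX, hPY, hPI, Set.mem_inter_iff, Set.mem_setOf_eq]
    tauto
  have hunion : PX ∪ PY ⊆ PU := by
    rintro p (hp | hp) <;>
      simp only [hPX, hPY, hPU, Set.mem_setOf_eq, Set.mem_union] at hp ⊢ <;> tauto
  have hcards : PX.ncard + PY.ncard ≤ PU.ncard + PI.ncard := by
    have h1 : (PX ∪ PY).ncard + (PX ∩ PY).ncard = PX.ncard + PY.ncard :=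
      Set.ncard_union_add_ncard_inter PX PY hPXf hPYf
    have h2 : (PX ∪ PY).ncard ≤ PU.ncard := Set.ncard_le_ncard hunion hPUf
    rw [hinter] at h1
    omega
  obtain ⟨a, haa⟩ := even_pairSet_ncard G hX
  obtain ⟨b, hbb⟩ := even_pairSet_ncard G hY
  obtain ⟨c, hcc⟩ := even_pairSet_ncard G (hX.union hY)
  obtain ⟨d, hdd⟩ := even_pairSet_ncard G (hX.inter_of_left Y)
  simp only [edgeCount]
  rw [← hPX, ← hPY, ← hPU, ← hPI] at *
  omega

private lemma delta_submod_s2 {V : Type*} (m : ℕ) (G : SimpleGraph V) {X Y : Set V}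
    (hX : X.Finite) (hY : Y.Finite) :
    delta m G (X ∪ Y) + delta m G (X ∩ Y) ≤ delta m G X + delta m G Y := by
  have hcard : (X ∪ Y).ncard + (X ∩ Y).ncard = X.ncard + Y.ncard :=
    Set.ncard_union_add_ncard_inter X Y hX hY
  have hedge := edgeCount_submod_s2 G hX hY
  simp only [delta]
  have hc : ((X ∪ Y).ncard : ℤ) + (X ∩ Y).ncard = (X.ncard : ℤ) + Y.ncard := by
    exact_mod_cast congrArg (Nat.cast : ℕ → ℤ) hcard
  have he : (edgeCount G X : ℤ) + edgeCount G Y ≤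
      (edgeCount G (X ∪ Y) : ℤ) + edgeCount G (X ∩ Y) := by exact_mod_cast hedge
  nlinarith [hc, he]

/-- Transitivity of self-sufficiency: if `A ⊆ B ⊆ C` with `A`, `B` finite,
`A` self-sufficient in `B` and `B` self-sufficient in `C`, then `A` is
self-sufficient in `C`. -/
theorem selfSuff_trans {V : Type*} (m : ℕ) (hm : 2 ≤ m) (G : SimpleGraph V)
    (A B C : Set V) (hA : A.Finite) (hB : B.Finite)
    (hAB : A ⊆ B) (hBC : B ⊆ C)
    (hss₁ : SelfSuff m G A B) (hss₂ : SelfSuff m G B C) :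
    SelfSuff m G A C := by
  refine ⟨hAB.trans hBC, ?_⟩
  intro A' hA'f hAA' hA'C
  have h1 : delta m G A ≤ delta m G (A' ∩ B) :=
    hss₁.2 (A' ∩ B) (hA'f.inter_of_left B) (Set.subset_inter hAA' hAB)
      Set.inter_subset_right
  have h2 : delta m G B ≤ delta m G (A' ∪ B) :=
    hss₂.2 (A' ∪ B) (hA'f.union hB) Set.subset_union_right
      (Set.union_subset hA'C hBC)
  have h3 := delta_submod_s2 m G hA'f hB
  linarith
end

section
/- Free amalgamation property of (K₀, ≤): let G be a finite graph whose vertex set is B ∪ C, let A = B ∩ C, and suppose there are no edges of G between B \ A and C \ A. If the induced subgraphs of G on B and on C are both in K₀, and A is self-sufficient in B and A is self-sufficient in C, then G ∈ K₀ (that is, δ(D) ≥ 0 for every set D of vertices of G). -/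
open scoped Cardinal

/-! Cut an arbitrary set `D` of vertices into `X = D ∩ B` and `Y = D ∩ C`. The defect in
submodularity of `δ` is the number of edges between `X \ Y` and `Y \ X`, and free amalgamation
leaves none, so `δ(D) + δ(D ∩ A) = δ(X) + δ(Y)`. Now `δ(X) ≥ 0` because `X` lies in `B`, and
`δ(Y) ≥ δ(Y ∩ A) = δ(D ∩ A)` by submodularity together with `A ≤ C`. -/

section Predimension

variable {V : Type*} (m : ℕ) (G : SimpleGraph V)

def adjPairs (A : Set V) : Set (V × V) :=
  {p | p.1 ∈ A ∧ p.2 ∈ A ∧ G.Adj p.1 p.2}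

-- `edgeCount` halves this count by truncating division, which is exact by evenness.
lemma even_ncard_adjPairs [Finite V] (A : Set V) : Even (adjPairs G A).ncard := by
  classical
  have := Fintype.ofFinite V
  set H := ((⊤ : G.Subgraph).induce A).spanningCoe
  have hset : adjPairs G A = ↑(Finset.univ.filter fun p : V × V ↦ H.Adj p.1 p.2) := by
    ext ⟨x, y⟩
    simp [adjPairs, H]
  rw [hset, Set.ncard_coe_finset, ← H.two_mul_card_edgeFinset]
  exact even_two_mul _

lemma two_mul_delta [Finite V] (A : Set V) :
    2 * delta m G A = 2 * m * A.ncard - (adjPairs G A).ncard := by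
  obtain ⟨k, hk⟩ := even_ncard_adjPairs G A
  have : 2 * edgeCount G A = (adjPairs G A).ncard := by
    change 2 * ((adjPairs G A).ncard / 2) = _
    omega
  rw [delta, ← this]
  push_cast
  ring

lemma adjPairs_inter (X Y : Set V) : adjPairs G (X ∩ Y) = adjPairs G X ∩ adjPairs G Y := by
  ext p
  simp only [adjPairs, Set.mem_inter_iff, Set.mem_ofPred_eq]
  tauto

lemma adjPairs_union_subset (X Y : Set V) :
    adjPairs G X ∪ adjPairs G Y ⊆ adjPairs G (X ∪ Y) := by
  rintro p (⟨h1, h2, h⟩ | ⟨h1, h2, h⟩) <;> simp_all [adjPairs]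

-- The subtracted set consists of the ordered adjacent pairs between `X \ Y` and `Y \ X`.
lemma two_mul_delta_union_add_inter [Finite V] (X Y : Set V) :
    2 * (delta m G (X ∪ Y) + delta m G (X ∩ Y)) +
        (adjPairs G (X ∪ Y) \ (adjPairs G X ∪ adjPairs G Y)).ncard =
      2 * (delta m G X + delta m G Y) := by
  have hcross := Set.ncard_sdiff_add_ncard_of_subset (adjPairs_union_subset G X Y)
  have hpairs := Set.ncard_union_add_ncard_inter (adjPairs G X) (adjPairs G Y)
  have hverts := Set.ncard_union_add_ncard_inter X Y
  rw [← adjPairs_inter] at hpairs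
  zify at hcross hpairs hverts
  simp only [mul_add, two_mul_delta]
  linear_combination 2 * (m : ℤ) * hverts + hcross - hpairs

lemma delta_union_add_delta_inter_le [Finite V] (X Y : Set V) :
    delta m G (X ∪ Y) + delta m G (X ∩ Y) ≤ delta m G X + delta m G Y := by
  have := two_mul_delta_union_add_inter m G X Y
  omega

lemma adjPairs_union_of_forall_not_adj {X Y : Set V}
    (h : ∀ x ∈ X \ Y, ∀ y ∈ Y \ X, ¬ G.Adj x y) :
    adjPairs G (X ∪ Y) = adjPairs G X ∪ adjPairs G Y := by
  refine Set.Subset.antisymm ?_ (adjPairs_union_subset G X Y)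
  rintro ⟨x, y⟩ ⟨hx, hy, hxy⟩
  have hx' := h x
  have hy' := h y
  have hyx := hxy.symm
  simp only [adjPairs, Set.mem_union, Set.mem_sdiff, Set.mem_ofPred_eq] at *
  tauto

lemma delta_union_add_delta_inter_of_forall_not_adj [Finite V] {X Y : Set V}
    (h : ∀ x ∈ X \ Y, ∀ y ∈ Y \ X, ¬ G.Adj x y) :
    delta m G (X ∪ Y) + delta m G (X ∩ Y) = delta m G X + delta m G Y := by
  have := two_mul_delta_union_add_inter m G X Y
  rw [adjPairs_union_of_forall_not_adj G h, Set.sdiff_self, Set.ncard_empty] at this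
  omega

variable {m G} in
lemma SelfSuff.delta_inter_le [Finite V] {A C Y : Set V} (hA : SelfSuff m G A C)
    (hY : Y ⊆ C) : delta m G (Y ∩ A) ≤ delta m G Y := by
  have hsub := delta_union_add_delta_inter_le m G Y A
  have hA' := hA.2 (Y ∪ A) (Set.toFinite _) Set.subset_union_right (Set.union_subset hY hA.1)
  omega

lemma edgeCount_induce (B : Set V) (S : Set B) :
    edgeCount (G.induce B) S = edgeCount G (Subtype.val '' S) := by
  have hinj : Function.Injective (Prod.map ((↑) : B → V) ((↑) : B → V)) :=
    Subtype.coe_injective.prodMap Subtype.coe_injective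
  rw [edgeCount, edgeCount, ← Set.ncard_image_of_injective _ hinj]
  congr 2
  ext ⟨x, y⟩
  simp

lemma delta_induce (B : Set V) (S : Set B) :
    delta m (G.induce B) S = delta m G (Subtype.val '' S) := by
  rw [delta, delta, edgeCount_induce, Set.ncard_image_of_injective _ Subtype.val_injective]

variable {m G} in
lemma InK0.delta_inter_nonneg {B : Set V} (hB : InK0 m (G.induce B)) (D : Set V) :
    0 ≤ delta m G (D ∩ B) := by
  simpa [delta_induce, Set.image_preimage_eq_inter_range] using hB (Subtype.val ⁻¹' D)

end Predimension

theorem free_amalgamation_general {V : Type*} [Fintype V] (m : ℕ)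
    (G : SimpleGraph V) (B C : Set V) (hUnion : B ∪ C = Set.univ)
    (hfree : ∀ b ∈ B \ (B ∩ C), ∀ c ∈ C \ (B ∩ C), ¬ G.Adj b c)
    (hB : InK0 m (G.induce B))
    (hssC : SelfSuff m G (B ∩ C) C) :
    InK0 m G := by
  intro D
  have hunion : D ∩ B ∪ D ∩ C = D := by
    rw [← Set.inter_union_distrib_left, hUnion, Set.inter_univ]
  have hinter : D ∩ B ∩ (D ∩ C) = D ∩ C ∩ (B ∩ C) := by
    ext; simp only [Set.mem_inter_iff]; tauto
  have hsplit := delta_union_add_delta_inter_of_forall_not_adj m G (X := D ∩ B) (Y := D ∩ C)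
    fun x hx y hy ↦
      hfree x ⟨hx.1.2, fun h ↦ hx.2 ⟨hx.1.1, h.2⟩⟩ y ⟨hy.1.2, fun h ↦ hy.2 ⟨hy.1.1, h.1⟩⟩
  rw [hunion, hinter] at hsplit
  linarith [hB.delta_inter_nonneg D, hssC.delta_inter_le (Set.inter_subset_right : D ∩ C ⊆ C)]

/-- Free amalgamation property of `(K₀, ≤)`: if a finite graph `G` has vertex
set `B ∪ C`, there are no edges between `B \ (B ∩ C)` and `C \ (B ∩ C)`, the
induced subgraphs on `B` and `C` lie in `K₀`, and `A = B ∩ C` is self-sufficient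
in both `B` and `C`, then `G ∈ K₀`. -/
theorem free_amalgamation {V : Type*} [Fintype V] (m : ℕ) (hm : 2 ≤ m)
    (G : SimpleGraph V) (B C : Set V) (hUnion : B ∪ C = Set.univ)
    (hfree : ∀ b ∈ B \ (B ∩ C), ∀ c ∈ C \ (B ∩ C), ¬ G.Adj b c)
    (hB : InK0 m (G.induce B)) (hC : InK0 m (G.induce C))
    (hssB : SelfSuff m G (B ∩ C) B) (hssC : SelfSuff m G (B ∩ C) C) :
    InK0 m G :=
  free_amalgamation_general m G B C hUnion hfree hB hssC
end

section
/- Existence and uniqueness of the self-sufficient closure: let M be a graph every finite induced subgraph of which lies in K₀. Then for every finite set A of vertices of M there is a unique smallest finite subset cl(A) of M with A ⊆ cl(A) and cl(A) self-sufficient in M; that is, cl(A) is finite, self-sufficient in M, contains A, and is contained in every finite self-sufficient subset of M containing A. -/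
open scoped Cardinal

section Aux

variable {V : Type*} (G : SimpleGraph V)

/-- Ordered pairs of adjacent vertices within `A`. -/
def pairSet (A : Set V) : Set (V × V) :=
  {p | p.1 ∈ A ∧ p.2 ∈ A ∧ G.Adj p.1 p.2}

variable {G}

lemma pairSet_finite_s6 {A : Set V} (hA : A.Finite) : (pairSet G A).Finite :=
  (hA.prod hA).subset (fun p hp => ⟨hp.1, hp.2.1⟩)

lemma even_pairSet {A : Set V} (hA : A.Finite) : Even (pairSet G A).ncard := by
  classical
  haveI := hA.fintype
  haveI : DecidableRel (G.induce A).Adj := Classical.decRel _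
  have key := SimpleGraph.two_mul_card_edgeFinset (G.induce A)
  have himg : pairSet G A =
      (fun q : ↥A × ↥A => ((q.1 : V), (q.2 : V))) '' {q | (G.induce A).Adj q.1 q.2} := by
    ext ⟨x, y⟩
    constructor
    · rintro ⟨hx, hy, hadj⟩
      exact ⟨(⟨x, hx⟩, ⟨y, hy⟩), hadj, rfl⟩
    · rintro ⟨⟨a, b⟩, hadj, heq⟩
      obtain ⟨h1, h2⟩ := Prod.mk.injEq .. ▸ heq
      subst h1; subst h2
      exact ⟨a.2, b.2, hadj⟩
  have hinj : Function.Injective (fun q : ↥A × ↥A => ((q.1 : V), (q.2 : V))) := by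
    rintro ⟨a, b⟩ ⟨c, d⟩ h
    obtain ⟨h1, h2⟩ := Prod.mk.injEq .. ▸ h
    simp only [Prod.ext_iff, Subtype.ext_iff]
    exact ⟨h1, h2⟩
  rw [himg, Set.ncard_image_of_injective _ hinj]
  have : {q : ↥A × ↥A | (G.induce A).Adj q.1 q.2}.ncard =
      (Finset.univ.filter fun (x, y) => (G.induce A).Adj x y).card := by
    rw [Set.ncard_eq_toFinset_card']
    congr 1
    ext ⟨x, y⟩
    simp
  rw [this, ← key]
  exact ⟨_, by ring⟩

lemma two_mul_edgeCount {A : Set V} (hA : A.Finite) :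
    2 * edgeCount G A = (pairSet G A).ncard := by
  obtain ⟨k, hk⟩ := even_pairSet (G := G) hA
  have : (pairSet G A).ncard = 2 * k := by omega
  simp only [edgeCount]
  have hps : {p : V × V | p.1 ∈ A ∧ p.2 ∈ A ∧ G.Adj p.1 p.2} = pairSet G A := rfl
  rw [hps, this]
  omega

lemma edgeCount_superadd {X Y : Set V} (hX : X.Finite) (hY : Y.Finite) :
    edgeCount G X + edgeCount G Y ≤ edgeCount G (X ∪ Y) + edgeCount G (X ∩ Y) := by
  have hsub : pairSet G X ∪ pairSet G Y ⊆ pairSet G (X ∪ Y) := by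
    rintro p (⟨h1, h2, h3⟩ | ⟨h1, h2, h3⟩)
    · exact ⟨Or.inl h1, Or.inl h2, h3⟩
    · exact ⟨Or.inr h1, Or.inr h2, h3⟩
  have hint : pairSet G X ∩ pairSet G Y = pairSet G (X ∩ Y) := by
    ext p
    constructor
    · rintro ⟨⟨h1, h2, h3⟩, ⟨h4, h5, _⟩⟩
      exact ⟨⟨h1, h4⟩, ⟨h2, h5⟩, h3⟩
    · rintro ⟨⟨h1, h4⟩, ⟨h2, h5⟩, h3⟩
      exact ⟨⟨h1, h2, h3⟩, ⟨h4, h5, h3⟩⟩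
  have h1 : (pairSet G X).ncard + (pairSet G Y).ncard =
      (pairSet G X ∪ pairSet G Y).ncard + (pairSet G X ∩ pairSet G Y).ncard :=
    (Set.ncard_union_add_ncard_inter _ _ (pairSet_finite_s6 hX) (pairSet_finite_s6 hY)).symm
  have h2 : (pairSet G X ∪ pairSet G Y).ncard ≤ (pairSet G (X ∪ Y)).ncard :=
    Set.ncard_le_ncard hsub (pairSet_finite_s6 (hX.union hY))
  have h3 : (pairSet G X ∩ pairSet G Y).ncard = (pairSet G (X ∩ Y)).ncard := by rw [hint]
  have e1 := two_mul_edgeCount (G := G) hX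
  have e2 := two_mul_edgeCount (G := G) hY
  have e3 := two_mul_edgeCount (G := G) (hX.union hY)
  have e4 := two_mul_edgeCount (G := G) (hX.inter_of_left Y)
  omega

lemma delta_submodular (m : ℕ) {X Y : Set V} (hX : X.Finite) (hY : Y.Finite) :
    delta m G (X ∪ Y) + delta m G (X ∩ Y) ≤ delta m G X + delta m G Y := by
  have hcard : (X ∪ Y).ncard + (X ∩ Y).ncard = X.ncard + Y.ncard :=
    Set.ncard_union_add_ncard_inter _ _ hX hY
  have hedge := edgeCount_superadd (G := G) hX hY
  simp only [delta]
  have hcard' : ((X ∪ Y).ncard : ℤ) + ((X ∩ Y).ncard : ℤ) = (X.ncard : ℤ) + (Y.ncard : ℤ) := by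
    exact_mod_cast hcard
  have hedge' : (edgeCount G X : ℤ) + (edgeCount G Y : ℤ) ≤
      (edgeCount G (X ∪ Y) : ℤ) + (edgeCount G (X ∩ Y) : ℤ) := by exact_mod_cast hedge
  nlinarith [hcard', hedge']

end Aux

/-- Existence and uniqueness of the self-sufficient closure: in a graph all of
whose finite induced subgraphs lie in `K₀`, every finite set `A` of vertices has a
unique smallest finite self-sufficient superset. -/
theorem closure_exists_unique {V : Type*} (m : ℕ) (hm : 2 ≤ m) (G : SimpleGraph V)
    (hK0 : ∀ A : Set V, A.Finite → 0 ≤ delta m G A)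
    (A : Set V) (hA : A.Finite) :
    ∃! C : Set V, C.Finite ∧ A ⊆ C ∧ SelfSuff m G C Set.univ ∧
      ∀ D : Set V, D.Finite → A ⊆ D → SelfSuff m G D Set.univ → C ⊆ D := by
  classical
  -- the set of attained delta values
  set T : Set ℕ := {n : ℕ | ∃ B : Set V, A ⊆ B ∧ B.Finite ∧ delta m G B = (n : ℤ)} with hT
  have hTne : T.Nonempty := by
    refine ⟨(delta m G A).toNat, A, subset_rfl, hA, ?_⟩
    rw [Int.toNat_of_nonneg (hK0 A hA)]
  obtain ⟨n0, hn0T, hn0min⟩ := Nat.lt_wfRel.wf.has_min T hTne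
  have hmin : ∀ B : Set V, A ⊆ B → B.Finite → (n0 : ℤ) ≤ delta m G B := by
    intro B hAB hB
    have h0 : 0 ≤ delta m G B := hK0 B hB
    have hmem : (delta m G B).toNat ∈ T := by
      exact ⟨B, hAB, hB, (Int.toNat_of_nonneg h0).symm⟩
    have h1 : ¬ (delta m G B).toNat < n0 := hn0min _ hmem
    have h2 : n0 ≤ (delta m G B).toNat := Nat.not_lt.mp h1
    calc (n0 : ℤ) ≤ ((delta m G B).toNat : ℤ) := by exact_mod_cast h2
      _ = delta m G B := Int.toNat_of_nonneg h0
  -- among minimizers, take minimal cardinality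
  set T2 : Set ℕ := {k : ℕ | ∃ B : Set V, A ⊆ B ∧ B.Finite ∧ delta m G B = (n0 : ℤ) ∧
    B.ncard = k} with hT2
  obtain ⟨B0, hAB0, hB0fin, hB0d⟩ := hn0T
  have hT2ne : T2.Nonempty := ⟨B0.ncard, B0, hAB0, hB0fin, hB0d, rfl⟩
  obtain ⟨k0, hk0T, hk0min⟩ := Nat.lt_wfRel.wf.has_min T2 hT2ne
  obtain ⟨C, hAC, hCfin, hCd, hCcard⟩ := hk0T
  have hCss : SelfSuff m G C Set.univ := by
    refine ⟨Set.subset_univ _, ?_⟩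
    intro A' hA'fin hCA' _
    rw [hCd]
    exact hmin A' (hAC.trans hCA') hA'fin
  have hCmin : ∀ D : Set V, D.Finite → A ⊆ D → SelfSuff m G D Set.univ → C ⊆ D := by
    intro D hDfin hAD hDss
    have hsub := delta_submodular (G := G) m hCfin hDfin
    have h1 : delta m G D ≤ delta m G (C ∪ D) :=
      hDss.2 (C ∪ D) (hCfin.union hDfin) Set.subset_union_right (Set.subset_univ _)
    have h2 : delta m G (C ∩ D) ≤ delta m G C := by linarith
    have h3 : (n0 : ℤ) ≤ delta m G (C ∩ D) :=
      hmin _ (Set.subset_inter hAC hAD) (hCfin.inter_of_left D)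
    have h4 : delta m G (C ∩ D) = (n0 : ℤ) := le_antisymm (hCd ▸ h2) h3
    have hmem2 : (C ∩ D).ncard ∈ T2 :=
      ⟨C ∩ D, Set.subset_inter hAC hAD, hCfin.inter_of_left D, h4, rfl⟩
    have h5 : ¬ (C ∩ D).ncard < k0 := hk0min _ hmem2
    have h6 : (C ∩ D).ncard ≤ C.ncard :=
      Set.ncard_le_ncard Set.inter_subset_left hCfin
    have h7 : C.ncard ≤ (C ∩ D).ncard := by omega
    have h8 : C ∩ D = C :=
      Set.eq_of_subset_of_ncard_le Set.inter_subset_left h7 hCfin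
    rw [← h8]
    exact Set.inter_subset_right
  refine ⟨C, ⟨hCfin, hAC, hCss, hCmin⟩, ?_⟩
  rintro D ⟨hDfin, hAD, hDss, hDmin⟩
  exact subset_antisymm (hDmin C hCfin hAC hCss) (hCmin D hDfin hAD hDss)
end

section
/- Let M be a graph every finite induced subgraph of which lies in K₀, and let A be a finite set of vertices of M. Then δ(cl(A)) ≤ δ(A), and δ(B) ≥ dim(A) for every finite set B of vertices with cl(A) ⊆ B. -/
open scoped Cardinal

/-!
δ is submodular on finite sets, so among the finite supersets of `A` of least predimension
(which exist because δ ≥ 0) one of least size lies inside every finite self-sufficient superset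
`C` of `A`: otherwise its intersection with `C` would be a smaller minimizer. It is itself
self-sufficient, hence it is `cl(A)`, and both inequalities are instances of its minimality.
-/

namespace SimpleGraph

variable {V : Type*} (G : SimpleGraph V)

def adjPairs (S : Set V) : Set (V × V) :=
  {p | p.1 ∈ S ∧ p.2 ∈ S ∧ G.Adj p.1 p.2}

def induceDartEquivAdjPairs (S : Set V) : (G.induce S).Dart ≃ G.adjPairs S where
  toFun d := ⟨(d.fst, d.snd), d.fst.2, d.snd.2, d.adj⟩
  invFun p := ⟨(⟨p.1.1, p.2.1⟩, ⟨p.1.2, p.2.2.1⟩), p.2.2.2⟩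
  left_inv _ := rfl
  right_inv _ := rfl

theorem ncard_adjPairs_eq_two_mul_edgeCount {S : Set V} (hS : S.Finite) :
    (G.adjPairs S).ncard = 2 * edgeCount G S := by
  classical
  have := hS.fintype
  have hdarts : (G.adjPairs S).ncard = 2 * (G.induce S).edgeFinset.card := by
    rw [← Nat.card_coe_set_eq, ← Nat.card_congr (G.induceDartEquivAdjPairs S),
      Nat.card_eq_fintype_card, dart_card_eq_twice_card_edges]
  change _ = 2 * ((G.adjPairs S).ncard / 2)
  omega

theorem adjPairs_finite {S : Set V} (hS : S.Finite) : (G.adjPairs S).Finite :=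
  (hS.prod hS).subset fun _ hp => ⟨hp.1, hp.2.1⟩

theorem adjPairs_inter (X Y : Set V) :
    G.adjPairs (X ∩ Y) = G.adjPairs X ∩ G.adjPairs Y := by
  ext p
  simp only [adjPairs, Set.mem_inter_iff, Set.mem_ofPred_eq]
  tauto

theorem adjPairs_union_subset (X Y : Set V) :
    G.adjPairs X ∪ G.adjPairs Y ⊆ G.adjPairs (X ∪ Y) := by
  rintro p (⟨h1, h2, h3⟩ | ⟨h1, h2, h3⟩)
  · exact ⟨Or.inl h1, Or.inl h2, h3⟩
  · exact ⟨Or.inr h1, Or.inr h2, h3⟩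

theorem edgeCount_add_edgeCount_le {X Y : Set V} (hX : X.Finite) (hY : Y.Finite) :
    edgeCount G X + edgeCount G Y ≤ edgeCount G (X ∪ Y) + edgeCount G (X ∩ Y) := by
  have hpairs : (G.adjPairs X).ncard + (G.adjPairs Y).ncard ≤
      (G.adjPairs (X ∪ Y)).ncard + (G.adjPairs (X ∩ Y)).ncard := by
    rw [← Set.ncard_union_add_ncard_inter _ _ (G.adjPairs_finite hX) (G.adjPairs_finite hY),
      ← adjPairs_inter]
    gcongr
    exacts [G.adjPairs_finite (hX.union hY), G.adjPairs_union_subset X Y]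
  simp only [G.ncard_adjPairs_eq_two_mul_edgeCount, hX, hY, hX.union hY,
    hX.inter_of_left] at hpairs
  omega

theorem delta_union_add_delta_inter_le (m : ℕ) {X Y : Set V} (hX : X.Finite) (hY : Y.Finite) :
    delta m G (X ∪ Y) + delta m G (X ∩ Y) ≤ delta m G X + delta m G Y := by
  have hcard := Set.ncard_union_add_ncard_inter X Y hX hY
  have hedges := G.edgeCount_add_edgeCount_le hX hY
  simp only [delta]
  zify at hcard hedges
  linear_combination (m : ℤ) * hcard + hedges

end SimpleGraph

section MinimalExtension

variable {V : Type*} {m : ℕ} {G : SimpleGraph V} {A B : Set V}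

structure IsMinimalDeltaExtension (m : ℕ) (G : SimpleGraph V) (A B : Set V) : Prop where
  finite : B.Finite
  subset : A ⊆ B
  delta_le : ∀ C : Set V, C.Finite → A ⊆ C → delta m G B ≤ delta m G C
  ncard_le : ∀ C : Set V, C.Finite → A ⊆ C → delta m G C = delta m G B → B.ncard ≤ C.ncard

theorem exists_isMinimalDeltaExtension (hK0 : ∀ C : Set V, C.Finite → 0 ≤ delta m G C)
    (hA : A.Finite) : ∃ B, IsMinimalDeltaExtension m G A B := by
  obtain ⟨d, ⟨B₁, hB₁, hAB₁, rfl⟩, hd⟩ := Int.exists_least_of_bdd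
    (P := fun d => ∃ C : Set V, C.Finite ∧ A ⊆ C ∧ delta m G C = d)
    ⟨0, fun _ ⟨C, hC, _, hCd⟩ => hCd ▸ hK0 C hC⟩ ⟨_, A, hA, subset_rfl, rfl⟩
  obtain ⟨B, ⟨hB, hAB, hBd⟩, hBmin⟩ := (measure Set.ncard).wf.has_min
    {C | C.Finite ∧ A ⊆ C ∧ delta m G C = delta m G B₁} ⟨B₁, hB₁, hAB₁, rfl⟩
  exact ⟨B, hB, hAB, fun C hC hAC => hBd ▸ hd _ ⟨C, hC, hAC, rfl⟩,
    fun C hC hAC hCB => not_lt.mp (hBmin C ⟨hC, hAC, hCB.trans hBd⟩)⟩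

namespace IsMinimalDeltaExtension

theorem selfSuff (hB : IsMinimalDeltaExtension m G A B) : SelfSuff m G B Set.univ :=
  ⟨Set.subset_univ B, fun C hC hBC _ => hB.delta_le C hC (hB.subset.trans hBC)⟩

theorem subset_of_selfSuff (hB : IsMinimalDeltaExtension m G A B) {C : Set V} (hAC : A ⊆ C)
    (hC : C.Finite) (hCss : SelfSuff m G C Set.univ) : B ⊆ C := by
  have hsub := G.delta_union_add_delta_inter_le m hB.finite hC
  have hunion := hCss.2 (B ∪ C) (hB.finite.union hC) Set.subset_union_right (Set.subset_univ _)
  have hBCfin := hB.finite.inter_of_left C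
  have hABC := Set.subset_inter hB.subset hAC
  have hinter := hB.delta_le _ hBCfin hABC
  have hBC : B ∩ C = B := Set.eq_of_subset_of_ncard_le Set.inter_subset_left
    (hB.ncard_le _ hBCfin hABC (by linarith)) hB.finite
  exact hBC ▸ Set.inter_subset_right

theorem scl_eq (hB : IsMinimalDeltaExtension m G A B) : scl m G A = B :=
  subset_antisymm (Set.sInter_subset_of_mem ⟨hB.subset, hB.finite, hB.selfSuff⟩)
    (Set.subset_sInter fun _ ⟨hAC, hC, hCss⟩ => hB.subset_of_selfSuff hAC hC hCss)

end IsMinimalDeltaExtension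

end MinimalExtension

theorem delta_closure_general {V : Type*} (m : ℕ) (G : SimpleGraph V)
    (hK0 : ∀ A : Set V, A.Finite → 0 ≤ delta m G A)
    (A : Set V) (hA : A.Finite) :
    delta m G (scl m G A) ≤ delta m G A ∧
      ∀ B : Set V, B.Finite → scl m G A ⊆ B → gdim m G A ≤ delta m G B := by
  obtain ⟨C, hC⟩ := exists_isMinimalDeltaExtension hK0 hA
  have hscl : scl m G A = C := hC.scl_eq
  refine ⟨hscl ▸ hC.delta_le A hA subset_rfl, fun B hB hCB => ?_⟩
  rw [hscl] at hCB
  rw [gdim, hscl]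
  exact hC.delta_le B hB (hC.subset.trans hCB)

/-- In a graph all of whose finite induced subgraphs lie in `K₀`:
`δ(cl(A)) ≤ δ(A)`, and `δ(B) ≥ d(A)` for every finite `B ⊇ cl(A)`. -/
theorem delta_closure {V : Type*} (m : ℕ) (hm : 2 ≤ m) (G : SimpleGraph V)
    (hK0 : ∀ A : Set V, A.Finite → 0 ≤ delta m G A)
    (A : Set V) (hA : A.Finite) :
    delta m G (scl m G A) ≤ delta m G A ∧
      ∀ B : Set V, B.Finite → scl m G A ⊆ B → gdim m G A ≤ delta m G B :=
  delta_closure_general m G hK0 A hA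
end

section
/- Let M be the countable (K₀,≤)-generic graph, let A be a finite set of vertices of M, and let X = gcl(A). Then the setwise stabilizer Aut_{{X}}(M) = { g ∈ Aut(M) : g[X] = X } has small index in Aut(M): the cardinality of the coset space Aut(M)/Aut_{{X}}(M) is strictly less than 2^ℵ₀. -/
/-! `scl`, `gdim` and `gcl` are defined from the graph alone, so they commute with graph
isomorphisms; hence an automorphism fixing `A` pointwise maps `gcl(A)` onto itself. The pointwise
stabiliser of `A` is the stabiliser of the inclusion `A → V` under the action of `Aut(M)` on the
countable set `A → V`, so it already has countable index. -/

open scoped Cardinal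

section Invariance

variable {V W : Type*} (m : ℕ) {G : SimpleGraph V} {H : SimpleGraph W} (φ : G ≃g H)

theorem edgeCount_image (S : Set V) : edgeCount H (φ '' S) = edgeCount G S := by
  have hpairs : {p : W × W | p.1 ∈ φ '' S ∧ p.2 ∈ φ '' S ∧ H.Adj p.1 p.2} =
      Prod.map φ φ '' {p : V × V | p.1 ∈ S ∧ p.2 ∈ S ∧ G.Adj p.1 p.2} := by
    ext ⟨x, y⟩
    constructor
    · rintro ⟨⟨a, ha, rfl⟩, ⟨b, hb, rfl⟩, hadj⟩
      exact ⟨(a, b), ⟨ha, hb, φ.map_adj_iff.mp hadj⟩, rfl⟩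
    · rintro ⟨⟨a, b⟩, ⟨ha, hb, hadj⟩, hab⟩
      cases hab
      exact ⟨⟨a, ha, rfl⟩, ⟨b, hb, rfl⟩, φ.map_adj_iff.mpr hadj⟩
  rw [edgeCount, edgeCount, hpairs,
    Set.ncard_image_of_injective _ (φ.injective.prodMap φ.injective)]

theorem delta_image (S : Set V) : delta m H (φ '' S) = delta m G S := by
  rw [delta, delta, edgeCount_image, Set.ncard_image_of_injective _ φ.injective]

theorem SelfSuff.image {A B : Set V} (h : SelfSuff m G A B) :
    SelfSuff m H (φ '' A) (φ '' B) := by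
  refine ⟨Set.image_mono h.1, fun A' hA' hAA' hA'B => ?_⟩
  obtain ⟨C, hCB, rfl⟩ := Set.subset_image_iff.mp hA'B
  rw [delta_image, delta_image]
  exact h.2 C (hA'.of_finite_image φ.injective.injOn)
    ((Set.image_subset_image_iff φ.injective).mp hAA') hCB

theorem selfSuff_univ_image_iff {B : Set V} :
    SelfSuff m H (φ '' B) Set.univ ↔ SelfSuff m G B Set.univ := by
  refine ⟨fun h => ?_, fun h => ?_⟩
  · simpa [Set.image_univ_of_surjective φ.symm.surjective, Set.image_image]
      using h.image m φ.symm
  · simpa [Set.image_univ_of_surjective φ.surjective] using h.image m φ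

theorem scl_image (A : Set V) : scl m H (φ '' A) = φ '' scl m G A := by
  have hsets : {B : Set W | φ '' A ⊆ B ∧ B.Finite ∧ SelfSuff m H B Set.univ} =
      Set.image φ '' {B : Set V | A ⊆ B ∧ B.Finite ∧ SelfSuff m G B Set.univ} := by
    ext B
    constructor
    · rintro ⟨hAB, hB, hss⟩
      refine ⟨φ ⁻¹' B, ⟨Set.image_subset_iff.mp hAB, hB.preimage φ.injective.injOn, ?_⟩,
        Set.image_preimage_eq B φ.surjective⟩
      rwa [← selfSuff_univ_image_iff m φ, Set.image_preimage_eq B φ.surjective]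
    · rintro ⟨C, ⟨hAC, hC, hss⟩, rfl⟩
      exact ⟨Set.image_mono hAC, hC.image φ, (selfSuff_univ_image_iff m φ).mpr hss⟩
  rw [scl, scl, hsets, Set.sInter_image, Set.sInter_eq_biInter,
    Set.image_iInter₂ φ.bijective]

theorem gdim_image (A : Set V) : gdim m H (φ '' A) = gdim m G A := by
  rw [gdim, gdim, scl_image, delta_image]

theorem gcl_image (X : Set V) : gcl m H (φ '' X) = φ '' gcl m G X := by
  ext v
  obtain ⟨w, rfl⟩ := φ.surjective v
  rw [φ.injective.mem_set_image]
  constructor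
  · rintro ⟨A, hAX, hA, hdim⟩
    obtain ⟨C, hCX, rfl⟩ := Set.subset_image_iff.mp hAX
    rw [← Set.image_singleton, ← Set.image_union, gdim_image, gdim_image] at hdim
    exact ⟨C, hCX, hA.of_finite_image φ.injective.injOn, hdim⟩
  · rintro ⟨C, hCX, hC, hdim⟩
    refine ⟨φ '' C, Set.image_mono hCX, hC.image φ, ?_⟩
    rw [← Set.image_singleton, ← Set.image_union, gdim_image, gdim_image, hdim]

end Invariance

theorem pointStab_le_setStab_gcl {V : Type*} (m : ℕ) (G : SimpleGraph V) (A : Set V) :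
    pointStab G A ≤ setStab G (gcl m G A) := fun g hg => by
  show g '' gcl m G A = gcl m G A
  rw [← gcl_image, Set.EqOn.image_eq_self hg]

theorem pointStab_eq_stabilizer {V : Type*} (G : SimpleGraph V) (A : Set V) :
    pointStab G A = MulAction.stabilizer (G ≃g G) ((↑) : A → V) := by
  ext g
  show (∀ a ∈ A, g a = a) ↔ _
  simp [funext_iff]

theorem countable_quotient_pointStab {V : Type*} [Countable V] (G : SimpleGraph V) {A : Set V}
    (hA : A.Finite) : Countable ((G ≃g G) ⧸ pointStab G A) := by
  have := hA.to_subtype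
  rw [pointStab_eq_stabilizer]
  exact (MulAction.orbitEquivQuotientStabilizer _ _).symm.injective.countable

theorem Subgroup.countable_quotient_of_le {α : Type*} [Group α] {s t : Subgroup α} (h : s ≤ t)
    [Countable (α ⧸ s)] : Countable (α ⧸ t) :=
  Function.Surjective.countable (f := Subgroup.quotientMapOfLE h) fun q =>
    QuotientGroup.induction_on q fun g => ⟨g, rfl⟩

theorem setStab_gcl_small_index_general (m : ℕ) (V : Type)
    [Countable V] (G : SimpleGraph V)
    (A : Set V) (hA : A.Finite) :
    Cardinal.mk ((G ≃g G) ⧸ setStab G (gcl m G A)) < Cardinal.continuum := by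
  have := countable_quotient_pointStab G hA
  have := Subgroup.countable_quotient_of_le (pointStab_le_setStab_gcl m G A)
  exact Cardinal.mk_le_aleph0.trans_lt Cardinal.aleph0_lt_continuum

/-- For `X = gcl(A)` with `A` finite, the setwise stabilizer of `X` has small
index in `Aut(M)`: the coset space has cardinality `< 2^ℵ₀`. -/
theorem setStab_gcl_small_index (m : ℕ) (hm : 2 ≤ m) (V : Type)
    [Countable V] [Infinite V] (G : SimpleGraph V) (hG : IsGeneric m G)
    (A : Set V) (hA : A.Finite) :
    Cardinal.mk ((G ≃g G) ⧸ setStab G (gcl m G A)) < Cardinal.continuum :=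
  setStab_gcl_small_index_general m V G A hA
end

section
/- Extension lemma: let M be the countable (K₀,≤)-generic graph, let A be a finite set of vertices of M, let X = gcl(A), and let g be an automorphism of the induced subgraph of M on X. Then there is an automorphism γ of M whose restriction to X equals g. -/
open scoped Cardinal

/-!
Back and forth over finite self-sufficient sets `B ⊇ A`, keeping an automorphism `γ` of `M`
that agrees with `g` on `B ∩ gcl A`. To absorb a vertex `u`, put `B' = cl (B ∪ {u})` and use
`g` on `gcl A`, `γ` elsewhere, on `B ∪ (B' ∩ gcl A)`. This is a partial isomorphism because a
self-sufficient `B ⊇ A` has no edges between `B \ gcl A` and `gcl A \ B`; its domain and image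
are self-sufficient because `B ∩ gcl A` and `B' ∩ gcl A` both have predimension `d(A)`, so that
adding `B' ∩ gcl A` to `B` does not increase `δ`. Genericity extends it to an automorphism, and
running the same step for `g⁻¹` and `γ⁻¹` makes the limit surjective.
-/

open Set

section Predimension

variable {V : Type*} {m : ℕ} {G : SimpleGraph V} {A C D : Set V}

theorem SimpleGraph.ncard_adj_pairs_eq_two_mul (G : SimpleGraph V) (hA : A.Finite) :
    {p : V × V | p.1 ∈ A ∧ p.2 ∈ A ∧ G.Adj p.1 p.2}.ncard =
      2 * (G.edgeSet ∩ A.sym2).ncard := by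
  classical
  have := hA.fintype
  let H := G.induce A
  have hdart : Nat.card H.Dart = {p : V × V | p.1 ∈ A ∧ p.2 ∈ A ∧ G.Adj p.1 p.2}.ncard :=
    Nat.card_congr
      { toFun := fun d => ⟨(d.fst, d.snd), d.fst.2, d.snd.2, d.adj⟩
        invFun := fun p => ⟨(⟨p.1.1, p.2.1⟩, ⟨p.1.2, p.2.2.1⟩), p.2.2.2⟩
        left_inv := fun _ => rfl
        right_inv := fun _ => rfl }
  have himage : Sym2.map Subtype.val '' H.edgeSet = G.edgeSet ∩ A.sym2 := by
    ext ⟨u, v⟩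
    simp only [mem_image, mem_inter_iff, SimpleGraph.mem_edgeSet, mk_mem_sym2_iff]
    constructor
    · rintro ⟨⟨⟨a, ha⟩, ⟨b, hb⟩⟩, hab, he⟩
      rw [Sym2.map_mk, Sym2.eq_iff] at he
      rcases he with ⟨rfl, rfl⟩ | ⟨rfl, rfl⟩
      · exact ⟨hab, ha, hb⟩
      · exact ⟨hab.symm, hb, ha⟩
    · rintro ⟨huv, hu, hv⟩
      exact ⟨s(⟨u, hu⟩, ⟨v, hv⟩), huv, rfl⟩
  have hedge : Nat.card H.edgeSet = (G.edgeSet ∩ A.sym2).ncard := by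
    rw [← himage, ncard_image_of_injective _ (Sym2.map.injective Subtype.val_injective)]
    rfl
  rw [← hdart, ← hedge, Nat.card_eq_fintype_card, H.dart_card_eq_twice_card_edges,
    Nat.card_eq_fintype_card, ← H.edgeFinset_card]

theorem delta_eq (hA : A.Finite) :
    delta m G A = m * A.ncard - (G.edgeSet ∩ A.sym2).ncard := by
  rw [delta, edgeCount, G.ncard_adj_pairs_eq_two_mul hA, Nat.mul_div_cancel_left _ two_pos]

theorem delta_empty : delta m G ∅ = 0 := by
  simp [delta_eq finite_empty]

theorem Set.Finite.edgeSet_inter_sym2 (hA : A.Finite) (G : SimpleGraph V) :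
    (G.edgeSet ∩ A.sym2).Finite := by
  rw [sym2_eq_mk_image]
  exact ((hA.prod hA).image _).inter_of_right _

/-- The defect `E(C ∪ D) \ (E(C) ∪ E(D))` consists of the edges between `C \ D` and `D \ C`. -/
theorem delta_union_add_delta_inter_add_ncard (hC : C.Finite) (hD : D.Finite) :
    delta m G (C ∪ D) + delta m G (C ∩ D) +
        ((G.edgeSet ∩ (C ∪ D).sym2) \ (G.edgeSet ∩ C.sym2 ∪ G.edgeSet ∩ D.sym2)).ncard =
      delta m G C + delta m G D := by
  have hmono : ∀ {S T : Set V}, S ⊆ T → G.edgeSet ∩ S.sym2 ⊆ G.edgeSet ∩ T.sym2 :=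
    fun hST => inter_subset_inter_right _ fun _ hz =>
      mem_sym2_iff_subset.2 ((mem_sym2_iff_subset.1 hz).trans hST)
  have hdefect := ncard_sdiff_add_ncard_of_subset
    (union_subset (hmono subset_union_left) (hmono subset_union_right))
    ((hC.union hD).edgeSet_inter_sym2 G)
  have hedges := ncard_union_add_ncard_inter _ _ (hC.edgeSet_inter_sym2 G)
    (hD.edgeSet_inter_sym2 G)
  have hinter : G.edgeSet ∩ (C ∩ D).sym2 = G.edgeSet ∩ C.sym2 ∩ (G.edgeSet ∩ D.sym2) := by
    rw [sym2_inter, inter_inter_distrib_left]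
  have hvert := ncard_union_add_ncard_inter _ _ hC hD
  rw [delta_eq hC, delta_eq hD, delta_eq (hC.union hD), delta_eq (hC.inter_of_left D), hinter]
  zify at hdefect hedges hvert
  linear_combination (m : ℤ) * hvert + hdefect - hedges

theorem delta_union_add_delta_inter_le_s15 (hC : C.Finite) (hD : D.Finite) :
    delta m G (C ∪ D) + delta m G (C ∩ D) ≤ delta m G C + delta m G D := by
  have := delta_union_add_delta_inter_add_ncard (m := m) (G := G) hC hD
  omega

theorem delta_union_add_delta_inter_lt (hC : C.Finite) (hD : D.Finite) {w z : V}
    (hw : w ∈ C \ D) (hz : z ∈ D \ C) (hwz : G.Adj w z) :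
    delta m G (C ∪ D) + delta m G (C ∩ D) < delta m G C + delta m G D := by
  have hcross : s(w, z) ∈
      (G.edgeSet ∩ (C ∪ D).sym2) \ (G.edgeSet ∩ C.sym2 ∪ G.edgeSet ∩ D.sym2) := by
    simp only [mem_sdiff, mem_union, mem_inter_iff, SimpleGraph.mem_edgeSet, mk_mem_sym2_iff]
    exact ⟨⟨hwz, .inl hw.1, .inr hz.1⟩, fun h => h.elim (fun h => hz.2 h.2.2)
      (fun h => hw.2 h.2.1)⟩
  have hpos := (ncard_pos (((hC.union hD).edgeSet_inter_sym2 G).sdiff)).2 ⟨_, hcross⟩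
  have := delta_union_add_delta_inter_add_ncard (m := m) (G := G) hC hD
  omega

theorem delta_image_s15 {f : V → V} (hf : InjOn f A)
    (hadj : ∀ a ∈ A, ∀ b ∈ A, G.Adj (f a) (f b) ↔ G.Adj a b) :
    delta m G (f '' A) = delta m G A := by
  have hpairs : {p : V × V | p.1 ∈ f '' A ∧ p.2 ∈ f '' A ∧ G.Adj p.1 p.2} =
      Prod.map f f '' {p : V × V | p.1 ∈ A ∧ p.2 ∈ A ∧ G.Adj p.1 p.2} := by
    ext ⟨u, v⟩
    constructor
    · rintro ⟨⟨a, ha, rfl⟩, ⟨b, hb, rfl⟩, hab⟩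
      exact ⟨(a, b), ⟨ha, hb, (hadj a ha b hb).1 hab⟩, rfl⟩
    · rintro ⟨⟨a, b⟩, ⟨ha, hb, hab⟩, he⟩
      cases he
      exact ⟨mem_image_of_mem f ha, mem_image_of_mem f hb, (hadj a ha b hb).2 hab⟩
  have hinj : InjOn (Prod.map f f) {p : V × V | p.1 ∈ A ∧ p.2 ∈ A ∧ G.Adj p.1 p.2} :=
    fun p hp q hq hpq => Prod.ext (hf hp.1 hq.1 (congrArg Prod.fst hpq))
      (hf hp.2.1 hq.2.1 (congrArg Prod.snd hpq))
  rw [delta, delta, edgeCount, edgeCount, hpairs, hf.ncard_image, hinj.ncard_image]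

end Predimension

section SelfSufficient

variable {V : Type*} {m : ℕ} {G : SimpleGraph V} {B C D E N : Set V}

theorem SelfSuff.of_superset_of_delta_le (hB : SelfSuff m G B univ) (hBN : B ⊆ N)
    (hN : delta m G N ≤ delta m G B) : SelfSuff m G N univ :=
  ⟨subset_univ N, fun E hE hNE _ => hN.trans (hB.2 E hE (hBN.trans hNE) (subset_univ E))⟩

theorem SelfSuff.delta_inter_le_s15 (hD : SelfSuff m G D univ) (hDfin : D.Finite) (hE : E.Finite) :
    delta m G (E ∩ D) ≤ delta m G E := by
  have := hD.2 (E ∪ D) (hE.union hDfin) subset_union_right (subset_univ _)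
  linarith [delta_union_add_delta_inter_le_s15 (m := m) (G := G) hE hDfin]

theorem SelfSuff.inter (hC : SelfSuff m G C univ) (hCfin : C.Finite)
    (hD : SelfSuff m G D univ) (hDfin : D.Finite) : SelfSuff m G (C ∩ D) univ := by
  refine ⟨subset_univ _, fun E hE hCDE _ => ?_⟩
  have hE' : E ∩ D ∩ C = C ∩ D := by
    rw [inter_assoc, inter_comm D, inter_eq_right.2 hCDE]
  calc delta m G (C ∩ D) = delta m G (E ∩ D ∩ C) := by rw [hE']
    _ ≤ delta m G (E ∩ D) := hC.delta_inter_le_s15 hCfin (hE.inter_of_left D)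
    _ ≤ delta m G E := hD.delta_inter_le_s15 hDfin hE

theorem subset_gcl {V : Type*} (m : ℕ) (G : SimpleGraph V) (S : Set V) : S ⊆ gcl m G S :=
  fun v hv => ⟨{v}, singleton_subset_iff.2 hv, finite_singleton v, by rw [union_self]⟩

end SelfSufficient

structure IsAutOn {V : Type*} (G : SimpleGraph V) (X : Set V) (f : V ≃ V) : Prop where
  mem_iff : ∀ v, f v ∈ X ↔ v ∈ X
  adj_iff : ∀ a ∈ X, ∀ b ∈ X, G.Adj (f a) (f b) ↔ G.Adj a b

section IsAutOn

variable {V : Type*} {G : SimpleGraph V} {X : Set V} {f : V ≃ V}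

theorem IsAutOn.symm (hf : IsAutOn G X f) : IsAutOn G X f.symm where
  mem_iff v := by rw [← hf.mem_iff, f.apply_symm_apply]
  adj_iff a ha b hb := by
    rw [← hf.adj_iff _ ((hf.mem_iff _).1 (by rwa [f.apply_symm_apply]))
      _ ((hf.mem_iff _).1 (by rwa [f.apply_symm_apply])), f.apply_symm_apply, f.apply_symm_apply]

theorem SimpleGraph.Iso.isAutOn_univ (σ : G ≃g G) : IsAutOn G univ σ.toEquiv :=
  ⟨fun _ => iff_of_true (mem_univ _) (mem_univ _), fun _ _ _ _ => σ.map_adj_iff⟩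

theorem SimpleGraph.Iso.isAutOn_ofSubtype [DecidablePred (· ∈ X)]
    (g : G.induce X ≃g G.induce X) : IsAutOn G X (Equiv.Perm.ofSubtype g.toEquiv) where
  mem_iff v := by
    by_cases hv : v ∈ X
    · simp [Equiv.Perm.ofSubtype_apply_of_mem _ hv, hv]
    · simp [Equiv.Perm.ofSubtype_apply_of_not_mem _ hv, hv]
  adj_iff a ha b hb := by
    rw [Equiv.Perm.ofSubtype_apply_of_mem _ ha, Equiv.Perm.ofSubtype_apply_of_mem _ hb]
    exact g.map_adj_iff (v := ⟨a, ha⟩) (w := ⟨b, hb⟩)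

end IsAutOn

namespace IsGeneric

variable {V : Type} {m : ℕ} {G : SimpleGraph V} (hG : IsGeneric m G)
  {A B C P Q S X Y Z : Set V}
include hG

theorem selfSuff_empty : SelfSuff m G ∅ univ := by
  obtain ⟨s, -, hs, ⟨e⟩⟩ := hG.2.2 Empty inferInstance ⊥ fun A => by
    rw [eq_empty_of_isEmpty A, delta_empty]
  rwa [isEmpty_coe_sort.1 e.toEquiv.symm.isEmpty] at hs

theorem delta_nonneg (hC : C.Finite) : 0 ≤ delta m G C := by
  simpa [delta_empty] using hG.selfSuff_empty.2 C hC (empty_subset C) (subset_univ C)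

theorem exists_selfSuff_superset (hQ : Q.Finite) :
    ∃ C, Q ⊆ C ∧ C.Finite ∧ SelfSuff m G C univ := by
  obtain ⟨F, hFfin, hFmono, hFss, hFuniv⟩ := hG.1
  choose N hN using fun v => mem_iUnion.1 (hFuniv.symm ▸ mem_univ v : v ∈ ⋃ n, F n)
  obtain ⟨n, hn⟩ := (hQ.image N).bddAbove
  exact ⟨F n, fun q hq => monotone_nat_of_le_succ hFmono (hn (mem_image_of_mem N hq)) (hN q),
    hFfin n, hFss n⟩

/-- A finite self-sufficient superset of least size lies inside every other one, because
self-sufficient sets are closed under intersection. -/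
theorem isLeast_scl (hQ : Q.Finite) :
    IsLeast {C | Q ⊆ C ∧ C.Finite ∧ SelfSuff m G C univ} (scl m G Q) := by
  obtain ⟨C, hC, hmin⟩ := (measure Set.ncard).wf.has_min
    {C | Q ⊆ C ∧ C.Finite ∧ SelfSuff m G C univ} (hG.exists_selfSuff_superset hQ)
  have hCle : ∀ D ∈ {C | Q ⊆ C ∧ C.Finite ∧ SelfSuff m G C univ}, C ⊆ D := by
    rintro D ⟨hQD, hDfin, hDss⟩
    have hCD : C ∩ D = C := eq_of_subset_of_ncard_le inter_subset_left
      (not_lt.1 (hmin (C ∩ D) ⟨subset_inter hC.1 hQD, hC.2.1.inter_of_left D,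
        hC.2.2.inter hC.2.1 hDss hDfin⟩)) hC.2.1
    exact hCD ▸ inter_subset_right
  have hscl : scl m G Q = C :=
    (sInter_subset_of_mem hC).antisymm (subset_sInter hCle)
  exact hscl ▸ ⟨hC, hCle⟩

theorem subset_scl (hQ : Q.Finite) : Q ⊆ scl m G Q := (hG.isLeast_scl hQ).1.1

theorem scl_finite (hQ : Q.Finite) : (scl m G Q).Finite := (hG.isLeast_scl hQ).1.2.1

theorem selfSuff_scl (hQ : Q.Finite) : SelfSuff m G (scl m G Q) univ :=
  (hG.isLeast_scl hQ).1.2.2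

theorem scl_subset (hQ : Q.Finite) (hQC : Q ⊆ C) (hC : C.Finite)
    (hCss : SelfSuff m G C univ) : scl m G Q ⊆ C :=
  (hG.isLeast_scl hQ).2 ⟨hQC, hC, hCss⟩

/-- A finite superset of `Q` of least predimension (one exists since `δ ≥ 0`) is
self-sufficient, hence contains `scl Q`. -/
theorem gdim_le_delta (hQC : Q ⊆ C) (hC : C.Finite) : gdim m G Q ≤ delta m G C := by
  obtain ⟨D, hD, hmin⟩ := (measure fun D => (delta m G D).toNat).wf.has_min
    {D | Q ⊆ D ∧ D.Finite} ⟨C, hQC, hC⟩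
  have hle : ∀ E, Q ⊆ E → E.Finite → delta m G D ≤ delta m G E := fun E hQE hE => by
    have : (delta m G D).toNat ≤ (delta m G E).toNat := not_lt.1 (hmin E ⟨hQE, hE⟩)
    have := hG.delta_nonneg hD.2
    have := hG.delta_nonneg hE
    omega
  have hDss : SelfSuff m G D univ :=
    ⟨subset_univ D, fun E hE hDE _ => hle E (hD.1.trans hDE) hE⟩
  calc gdim m G Q ≤ delta m G D :=
        (hG.selfSuff_scl (hC.subset hQC)).2 D hD.2 (hG.scl_subset (hC.subset hQC) hD.1 hD.2 hDss)
          (subset_univ D)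
    _ ≤ delta m G C := hle C hQC hC

theorem selfSuff_iff_delta_le_gdim (hB : B.Finite) :
    SelfSuff m G B univ ↔ delta m G B ≤ gdim m G B :=
  ⟨fun hBss => hBss.2 _ (hG.scl_finite hB) (hG.subset_scl hB) (subset_univ _),
    fun h => ⟨subset_univ B, fun _ hE hBE _ => h.trans (hG.gdim_le_delta hBE hE)⟩⟩

theorem gdim_mono (hPQ : P ⊆ Q) (hQ : Q.Finite) : gdim m G P ≤ gdim m G Q :=
  hG.gdim_le_delta (hPQ.trans (hG.subset_scl hQ)) (hG.scl_finite hQ)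

theorem gdim_union_add_gdim_inter_le (hP : P.Finite) (hQ : Q.Finite) :
    gdim m G (P ∪ Q) + gdim m G (P ∩ Q) ≤ gdim m G P + gdim m G Q := by
  have hPcl := hG.scl_finite hP
  have hQcl := hG.scl_finite hQ
  have hunion : gdim m G (P ∪ Q) ≤ delta m G (scl m G P ∪ scl m G Q) :=
    hG.gdim_le_delta (union_subset_union (hG.subset_scl hP) (hG.subset_scl hQ))
      (hPcl.union hQcl)
  have hinter : gdim m G (P ∩ Q) ≤ delta m G (scl m G P ∩ scl m G Q) :=
    hG.gdim_le_delta (inter_subset_inter (hG.subset_scl hP) (hG.subset_scl hQ))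
      (hPcl.inter_of_left _)
  have := delta_union_add_delta_inter_le_s15 (m := m) (G := G) hPcl hQcl
  exact (add_le_add hunion hinter).trans this

theorem gdim_union_singleton_of_subset {v : V} (hSB : S ⊆ B) (hB : B.Finite)
    (h : gdim m G (S ∪ {v}) = gdim m G S) : gdim m G (B ∪ {v}) = gdim m G B := by
  have hS := hB.subset hSB
  have hsub := hG.gdim_union_add_gdim_inter_le hB (hS.union (finite_singleton v))
  have hinter := hG.gdim_mono (subset_inter (hSB) subset_union_left)
    (hB.inter_of_left (S ∪ {v}))
  have hunion : B ∪ (S ∪ {v}) = B ∪ {v} := by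
    rw [← union_assoc, union_eq_left.2 hSB]
  rw [hunion] at hsub
  exact le_antisymm (by linarith) (hG.gdim_mono subset_union_left (hB.union (finite_singleton v)))

theorem mem_gcl_iff (hS : S.Finite) {v : V} :
    v ∈ gcl m G S ↔ gdim m G (S ∪ {v}) = gdim m G S :=
  ⟨fun ⟨_, hAS, _, h⟩ => hG.gdim_union_singleton_of_subset hAS hS h,
    fun h => ⟨S, subset_rfl, hS, h⟩⟩

theorem gdim_union_of_subset_gcl (hA : A.Finite) (hS : S.Finite) (hSA : S ⊆ gcl m G A) :
    gdim m G (A ∪ S) = gdim m G A := by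
  induction S, hS using Set.Finite.induction_on with
  | empty => rw [union_empty]
  | @insert a S _ hS ih =>
    have ha := (hG.mem_gcl_iff hA).1 (hSA (mem_insert a S))
    rw [union_insert, insert_eq, union_comm, hG.gdim_union_singleton_of_subset
      subset_union_left (hA.union hS) ha, ih ((subset_insert a S).trans hSA)]

theorem scl_subset_gcl (hA : A.Finite) (hZA : Z ⊆ gcl m G A) (hZ : Z.Finite) :
    scl m G Z ⊆ gcl m G A := by
  intro w hw
  have hAZ := hA.union hZ
  refine (hG.mem_gcl_iff hA).2 (le_antisymm ?_ (hG.gdim_mono subset_union_left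
    (hA.union (finite_singleton w))))
  calc gdim m G (A ∪ {w}) ≤ delta m G (scl m G (A ∪ Z)) :=
        hG.gdim_le_delta (union_subset (subset_union_left.trans (hG.subset_scl hAZ))
          (singleton_subset_iff.2 (hG.scl_subset hZ (subset_union_right.trans
            (hG.subset_scl hAZ)) (hG.scl_finite hAZ) (hG.selfSuff_scl hAZ) hw)))
          (hG.scl_finite hAZ)
    _ = gdim m G A := hG.gdim_union_of_subset_gcl hA hZ hZA

theorem gcl_eq_of_subset_gcl_of_gdim_eq (hA : A.Finite) (hB : B.Finite) (hBA : B ⊆ gcl m G A)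
    (hdim : gdim m G B = gdim m G A) : gcl m G B = gcl m G A := by
  have hAB : gdim m G (A ∪ B) = gdim m G A := hG.gdim_union_of_subset_gcl hA hB hBA
  ext v
  have hfin := (hA.union hB).union (finite_singleton v)
  rw [hG.mem_gcl_iff hA, hG.mem_gcl_iff hB]
  constructor
  · intro hv
    have := hG.gdim_union_singleton_of_subset (subset_union_right (s := A)) (hA.union hB) hv
    refine le_antisymm ?_ (hG.gdim_mono subset_union_left (hA.union (finite_singleton v)))
    calc gdim m G (A ∪ {v}) ≤ gdim m G (A ∪ B ∪ {v}) :=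
          hG.gdim_mono (union_subset_union_left _ subset_union_left) hfin
      _ = gdim m G A := by rw [this, hAB]
  · intro hv
    have := hG.gdim_union_singleton_of_subset (subset_union_left (t := B)) (hA.union hB) hv
    refine le_antisymm ?_ (hG.gdim_mono subset_union_left (hB.union (finite_singleton v)))
    calc gdim m G (B ∪ {v}) ≤ gdim m G (A ∪ B ∪ {v}) :=
          hG.gdim_mono (union_subset_union_left _ subset_union_right) hfin
      _ = gdim m G B := by rw [this, hAB, hdim]

theorem delta_eq_gdim_of_subset_gcl (hA : A.Finite) (hY : Y.Finite)
    (hYss : SelfSuff m G Y univ) (hAY : A ⊆ Y) (hYA : Y ⊆ gcl m G A) :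
    delta m G Y = gdim m G A := by
  have hscl : scl m G Y = Y :=
    (hG.scl_subset hY subset_rfl hY hYss).antisymm (hG.subset_scl hY)
  rw [← hG.gdim_union_of_subset_gcl hA hY hYA, union_eq_right.2 hAY, gdim, hscl]

theorem selfSuff_inter_gcl (hA : A.Finite) (hB : B.Finite) (hBss : SelfSuff m G B univ) :
    SelfSuff m G (B ∩ gcl m G A) univ := by
  have hfin : (B ∩ gcl m G A).Finite := hB.inter_of_left _
  have hscl : scl m G (B ∩ gcl m G A) = B ∩ gcl m G A :=
    (subset_inter (hG.scl_subset hfin inter_subset_left hB hBss)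
      (hG.scl_subset_gcl hA inter_subset_right hfin)).antisymm (hG.subset_scl hfin)
  exact hscl ▸ hG.selfSuff_scl hfin

/-- An edge `w z` would make `δ(B ∪ Z) < δ(B)` for `Z = scl ((B ∩ gcl A) ∪ {z})`, since
`δ(B ∩ Z) = δ(Z) = d(A)`. -/
theorem not_adj_of_mem_gcl (hA : A.Finite) (hB : B.Finite) (hBss : SelfSuff m G B univ)
    (hAB : A ⊆ B) {w z : V} (hw : w ∈ B \ gcl m G A) (hz : z ∈ gcl m G A \ B) :
    ¬ G.Adj w z := by
  intro hwz
  set X := gcl m G A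
  have hY : (B ∩ X).Finite := hB.inter_of_left X
  have hYz : (B ∩ X ∪ {z}).Finite := hY.union (finite_singleton z)
  have hYzX : B ∩ X ∪ {z} ⊆ X := union_subset inter_subset_right (singleton_subset_iff.2 hz.1)
  set Z := scl m G (B ∩ X ∪ {z})
  have hZ : Z.Finite := hG.scl_finite hYz
  have hZX : Z ⊆ X := hG.scl_subset_gcl hA hYzX hYz
  have hBZ : B ∩ Z = B ∩ X :=
    (inter_subset_inter_right B hZX).antisymm fun x hx =>
      ⟨hx.1, hG.subset_scl hYz (subset_union_left hx)⟩
  have hAY : A ⊆ B ∩ X := subset_inter hAB (subset_gcl m G A)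
  have hlt := delta_union_add_delta_inter_lt (m := m) hB hZ
    ⟨hw.1, fun h => hw.2 (hZX h)⟩ ⟨hG.subset_scl hYz (subset_union_right rfl), hz.2⟩ hwz
  have hdZ : delta m G Z = gdim m G A := by
    rw [← hG.gdim_union_of_subset_gcl hA hYz hYzX, ← union_assoc, union_eq_right.2 hAY]
    rfl
  have hdY := hG.delta_eq_gdim_of_subset_gcl hA hY (hG.selfSuff_inter_gcl hA hB hBss) hAY
    inter_subset_right
  have := hBss.2 (B ∪ Z) (hB.union hZ) subset_union_left (subset_univ _)
  rw [hBZ] at hlt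
  linarith

theorem gdim_image_le {f : V → V} (hZ : Z.Finite) (hf : InjOn f (scl m G Z))
    (hadj : ∀ a ∈ scl m G Z, ∀ b ∈ scl m G Z, G.Adj (f a) (f b) ↔ G.Adj a b) :
    gdim m G (f '' Z) ≤ gdim m G Z :=
  (hG.gdim_le_delta (image_mono (hG.subset_scl hZ)) ((hG.scl_finite hZ).image f)).trans_eq
    (delta_image_s15 hf hadj)

theorem gdim_image_of_isAutOn (hX : ∀ ⦃Z⦄, Z ⊆ X → Z.Finite → scl m G Z ⊆ X)
    {f : V ≃ V} (hf : IsAutOn G X f) (hZ : Z.Finite) (hZX : Z ⊆ X) :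
    gdim m G (f '' Z) = gdim m G Z := by
  have hfZX : f '' Z ⊆ X := image_subset_iff.2 fun z hz => (hf.mem_iff z).2 (hZX hz)
  refine le_antisymm (hG.gdim_image_le hZ f.injective.injOn fun a ha b hb =>
    hf.adj_iff a (hX hZX hZ ha) b (hX hZX hZ hb)) ?_
  have := hG.gdim_image_le (hZ.image f) f.symm.injective.injOn fun a ha b hb =>
    hf.symm.adj_iff a (hX hfZX (hZ.image f) ha) b (hX hfZX (hZ.image f) hb)
  rwa [f.symm_image_image] at this

theorem selfSuff_image_of_isAutOn (hX : ∀ ⦃Z⦄, Z ⊆ X → Z.Finite → scl m G Z ⊆ X)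
    {f : V ≃ V} (hf : IsAutOn G X f) (hZ : Z.Finite) (hZX : Z ⊆ X)
    (hZss : SelfSuff m G Z univ) :
    SelfSuff m G (f '' Z) univ := by
  rw [hG.selfSuff_iff_delta_le_gdim (hZ.image f), hG.gdim_image_of_isAutOn hX hf hZ hZX,
    delta_image_s15 f.injective.injOn fun a ha b hb => hf.adj_iff a (hZX ha) b (hZX hb)]
  exact (hG.selfSuff_iff_delta_le_gdim hZ).1 hZss

theorem gdim_image_iso (σ : G ≃g G) (hZ : Z.Finite) : gdim m G (σ '' Z) = gdim m G Z :=
  hG.gdim_image_of_isAutOn (fun _ _ _ => subset_univ _) σ.isAutOn_univ hZ (subset_univ Z)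

theorem selfSuff_image_iso (σ : G ≃g G) (hZ : Z.Finite) (hZss : SelfSuff m G Z univ) :
    SelfSuff m G (σ '' Z) univ :=
  hG.selfSuff_image_of_isAutOn (fun _ _ _ => subset_univ _) σ.isAutOn_univ hZ
    (subset_univ Z) hZss

theorem image_gcl_subset_gcl_image (σ : G ≃g G) : σ '' gcl m G S ⊆ gcl m G (σ '' S) := by
  rintro _ ⟨v, ⟨B, hBS, hB, hv⟩, rfl⟩
  refine ⟨σ '' B, image_mono hBS, hB.image σ, ?_⟩
  rw [← image_singleton, ← image_union, hG.gdim_image_iso σ (hB.union (finite_singleton v)),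
    hG.gdim_image_iso σ hB, hv]

theorem gcl_image_iso (σ : G ≃g G) : gcl m G (σ '' S) = σ '' gcl m G S := by
  refine (hG.image_gcl_subset_gcl_image σ).antisymm' ?_
  have hS : σ.symm '' (σ '' S) = S := σ.toEquiv.symm_image_image S
  have := hS ▸ hG.image_gcl_subset_gcl_image σ.symm (S := σ '' S)
  exact fun v hv => ⟨σ.symm v, this (mem_image_of_mem _ hv), σ.apply_symm_apply v⟩

theorem gcl_image_of_isAutOn (hA : A.Finite) {f : V ≃ V} (hf : IsAutOn G (gcl m G A) f) :
    gcl m G (f '' A) = gcl m G A := by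
  have hAX := subset_gcl m G A
  exact hG.gcl_eq_of_subset_gcl_of_gdim_eq hA (hA.image f)
    (image_subset_iff.2 fun a ha => (hf.mem_iff a).2 (hAX ha))
    (hG.gdim_image_of_isAutOn (fun _ => hG.scl_subset_gcl hA) hf hA hAX)

theorem exists_iso_eqOn {N : Set V} (hN : N.Finite) (hNss : SelfSuff m G N univ) {φ : V → V}
    (hφ : InjOn φ N)
    (hadj : ∀ a ∈ N, ∀ b ∈ N, G.Adj (φ a) (φ b) ↔ G.Adj a b)
    (himage : SelfSuff m G (φ '' N) univ) : ∃ τ : G ≃g G, EqOn τ φ N := by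
  let e : G.induce N ≃g G.induce (φ '' N) :=
    ⟨Equiv.Set.imageOfInjOn φ N hφ, fun {a b} => hadj a a.2 b b.2⟩
  obtain ⟨τ, hτ⟩ := hG.2.1 N (φ '' N) hN (hN.image φ) hNss himage e
  exact ⟨τ, fun v hv => hτ ⟨v, hv⟩⟩

end IsGeneric

/-- A finite stage of the back-and-forth construction of an automorphism extending `f` on
`gcl A`. -/
structure IsApprox {V : Type*} (m : ℕ) (G : SimpleGraph V) (A : Set V) (f : V ≃ V) (B : Set V)
    (γ : G ≃g G) : Prop where
  finite : B.Finite
  selfSuff : SelfSuff m G B univ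
  subset : A ⊆ B
  eqOn : EqOn γ f (B ∩ gcl m G A)

namespace IsApprox

variable {V : Type} {m : ℕ} {G : SimpleGraph V} (hG : IsGeneric m G) {A B : Set V}
  (hA : A.Finite) {f : V ≃ V} {γ : G ≃g G}
include hG hA

theorem delta_union_inter_gcl_le (h : IsApprox m G A f B γ) {B' : Set V} (hB' : B'.Finite)
    (hB'ss : SelfSuff m G B' univ) (hBB' : B ⊆ B') :
    delta m G (B ∪ (B' ∩ gcl m G A)) ≤ delta m G B := by
  have hAX := subset_gcl m G A
  have hBX := hG.delta_eq_gdim_of_subset_gcl hA (h.finite.inter_of_left _)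
    (hG.selfSuff_inter_gcl hA h.finite h.selfSuff) (subset_inter h.subset hAX) inter_subset_right
  have hB'X := hG.delta_eq_gdim_of_subset_gcl hA (hB'.inter_of_left _)
    (hG.selfSuff_inter_gcl hA hB' hB'ss) (subset_inter (h.subset.trans hBB') hAX)
    inter_subset_right
  have := delta_union_add_delta_inter_le_s15 (m := m) (G := G) h.finite (hB'.inter_of_left (gcl m G A))
  rw [← inter_assoc, inter_eq_left.2 hBB'] at this
  linarith

variable (hf : IsAutOn G (gcl m G A) f)
include hf

theorem mem_gcl_iff (h : IsApprox m G A f B γ) (v : V) :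
    γ v ∈ gcl m G A ↔ v ∈ gcl m G A := by
  have himage : γ '' gcl m G A = gcl m G A := by
    rw [← hG.gcl_image_iso, (h.eqOn.mono (subset_inter h.subset (subset_gcl m G A))).image_eq,
      hG.gcl_image_of_isAutOn hA hf]
  conv_lhs => rw [← himage]
  exact γ.injective.mem_set_image

theorem adj_iff_of_not_mem_gcl (h : IsApprox m G A f B γ) {a b : V} (ha : a ∈ B \ gcl m G A)
    (hb : b ∈ gcl m G A) : G.Adj (γ a) (f b) ↔ G.Adj a b := by
  by_cases hbB : b ∈ B
  · rw [← h.eqOn ⟨hbB, hb⟩]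
    exact γ.map_adj_iff
  have hc : γ.symm (f b) ∈ gcl m G A := by
    rw [← h.mem_gcl_iff hG hA hf, γ.apply_symm_apply]
    exact (hf.mem_iff b).2 hb
  have hcB : γ.symm (f b) ∉ B := fun hcB => by
    have hcb : γ.symm (f b) = b :=
      f.injective (by rw [← h.eqOn ⟨hcB, hc⟩, γ.apply_symm_apply])
    exact hbB (hcb ▸ hcB)
  refine iff_of_false ?_ (hG.not_adj_of_mem_gcl hA h.finite h.selfSuff h.subset ha ⟨hb, hbB⟩)
  rw [← γ.apply_symm_apply (f b), γ.map_adj_iff]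
  exact hG.not_adj_of_mem_gcl hA h.finite h.selfSuff h.subset ha ⟨hc, hcB⟩

theorem adj_iff_of_eqOn (h : IsApprox m G A f B γ) {φ : V → V} (hφf : EqOn φ f (gcl m G A))
    (hφγ : EqOn φ γ (gcl m G A)ᶜ) {a b : V} (ha : a ∈ B ∪ gcl m G A)
    (hb : b ∈ B ∪ gcl m G A) : G.Adj (φ a) (φ b) ↔ G.Adj a b := by
  by_cases haX : a ∈ gcl m G A <;> by_cases hbX : b ∈ gcl m G A
  · rw [hφf haX, hφf hbX]
    exact hf.adj_iff a haX b hbX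
  · rw [G.adj_comm, G.adj_comm a, hφf haX, hφγ hbX]
    exact h.adj_iff_of_not_mem_gcl hG hA hf ⟨hb.resolve_right hbX, hbX⟩ haX
  · rw [hφγ haX, hφf hbX]
    exact h.adj_iff_of_not_mem_gcl hG hA hf ⟨ha.resolve_right haX, haX⟩ hbX
  · rw [hφγ haX, hφγ hbX]
    exact γ.map_adj_iff

/-- `φ = f` on `gcl A` and `φ = γ` elsewhere is an isomorphism from
`N = B ∪ (scl (B ∪ {u}) ∩ gcl A)` onto a self-sufficient set, so genericity extends it. -/
theorem exists_forward (h : IsApprox m G A f B γ) (u : V) :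
    ∃ τ : G ≃g G, IsApprox m G A f (scl m G (B ∪ {u})) τ ∧ EqOn τ γ B := by
  classical
  set X := gcl m G A
  have hBu : (B ∪ {u}).Finite := h.finite.union (finite_singleton u)
  have hBB' : B ⊆ scl m G (B ∪ {u}) := subset_union_left.trans (hG.subset_scl hBu)
  set N := B ∪ (scl m G (B ∪ {u}) ∩ X)
  have hN : N.Finite := h.finite.union ((hG.scl_finite hBu).inter_of_left X)
  set φ := X.piecewise f γ with hφ_def
  have hφγ : EqOn φ γ B := fun b hb => by
    by_cases hbX : b ∈ X
    · rw [hφ_def, piecewise_eq_of_mem _ _ _ hbX, h.eqOn ⟨hb, hbX⟩]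
    · exact piecewise_eq_of_notMem _ _ _ hbX
  have hφ : φ.Injective := (injective_piecewise_iff X).2 ⟨f.injective.injOn, γ.injective.injOn,
    fun x hx y hy hxy => hy ((h.mem_gcl_iff hG hA hf y).1 (hxy ▸ (hf.mem_iff x).2 hx))⟩
  have hφadj : ∀ a ∈ N, ∀ b ∈ N, G.Adj (φ a) (φ b) ↔ G.Adj a b := fun a ha b hb =>
    h.adj_iff_of_eqOn hG hA hf (piecewise_eqOn _ _ _) (piecewise_eqOn_compl _ _ _)
      (union_subset_union_right B inter_subset_right ha)
      (union_subset_union_right B inter_subset_right hb)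
  have hNδ := h.delta_union_inter_gcl_le hG hA (hG.scl_finite hBu) (hG.selfSuff_scl hBu) hBB'
  have himage : SelfSuff m G (φ '' N) univ := by
    refine (hG.selfSuff_image_iso γ h.finite h.selfSuff).of_superset_of_delta_le
      (hφγ.image_eq ▸ image_mono subset_union_left) ?_
    rw [delta_image_s15 hφ.injOn hφadj, delta_image_s15 γ.injective.injOn fun _ _ _ _ => γ.map_adj_iff]
    exact hNδ
  obtain ⟨τ, hτ⟩ := hG.exists_iso_eqOn hN
    (h.selfSuff.of_superset_of_delta_le subset_union_left hNδ) hφ.injOn hφadj himage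
  refine ⟨τ, ⟨hG.scl_finite hBu, hG.selfSuff_scl hBu, h.subset.trans hBB', fun v hv => ?_⟩,
    fun b hb => (hτ (Or.inl hb)).trans (hφγ hb)⟩
  exact (hτ (Or.inr hv)).trans (piecewise_eq_of_mem _ _ _ hv.2)

theorem symm (h : IsApprox m G A f B γ) : IsApprox m G (f '' A) f.symm (γ '' B) γ.symm where
  finite := h.finite.image γ
  selfSuff := hG.selfSuff_image_iso γ h.finite h.selfSuff
  subset :=
    (h.eqOn.mono (subset_inter h.subset (subset_gcl m G A))).image_eq ▸ image_mono h.subset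
  eqOn := by
    rintro _ ⟨⟨b, hb, rfl⟩, hbX⟩
    rw [hG.gcl_image_of_isAutOn hA hf, h.mem_gcl_iff hG hA hf] at hbX
    rw [γ.symm_apply_apply, h.eqOn ⟨hb, hbX⟩, f.symm_apply_apply]

theorem exists_back_and_forth (h : IsApprox m G A f B γ) (u : V) :
    ∃ B' γ', IsApprox m G A f B' γ' ∧ B ⊆ B' ∧ EqOn γ' γ B ∧ u ∈ B' ∧
      u ∈ γ' '' B' := by
  have hA' : (f '' A).Finite := hA.image f
  have hf' : IsAutOn G (gcl m G (f '' A)) f.symm :=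
    (hG.gcl_image_of_isAutOn hA hf).symm ▸ hf.symm
  obtain ⟨τ, hτ, hτγ⟩ := h.exists_forward hG hA hf u
  obtain ⟨ψ, hψ, hψτ⟩ := (hτ.symm hG hA hf).exists_forward hG hA' hf' u
  have hback := hψ.symm hG hA' hf'
  rw [f.symm_image_image, f.symm_symm] at hback
  set B₁ := scl m G (B ∪ {u})
  have hBu : (B ∪ {u}).Finite := h.finite.union (finite_singleton u)
  have hτB : (τ '' B₁ ∪ {u}).Finite :=
    ((hG.scl_finite hBu).image τ).union (finite_singleton u)
  have hψτ' : ∀ b ∈ B₁, ψ (τ b) = b := fun b hb => by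
    rw [hψτ (mem_image_of_mem τ hb), τ.symm_apply_apply]
  have hsub : B₁ ⊆ ψ '' scl m G (τ '' B₁ ∪ {u}) := fun b hb =>
    ⟨τ b, hG.subset_scl hτB (.inl (mem_image_of_mem τ hb)), hψτ' b hb⟩
  refine ⟨_, ψ.symm, hback, (subset_union_left.trans (hG.subset_scl hBu)).trans hsub,
    fun b hb => ?_, hsub (hG.subset_scl hBu (.inr rfl)),
    ⟨ψ u, mem_image_of_mem ψ (hG.subset_scl hτB (.inr rfl)), ψ.symm_apply_apply u⟩⟩
  rw [ψ.symm_apply_eq.2 (hψτ' b (hG.subset_scl hBu (.inl hb))).symm, hτγ hb]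

end IsApprox

theorem IsGeneric.exists_isApprox {V : Type} {m : ℕ} {G : SimpleGraph V} (hG : IsGeneric m G)
    {A : Set V} (hA : A.Finite) {f : V ≃ V} (hf : IsAutOn G (gcl m G A) f) :
    ∃ B γ, IsApprox m G A f B γ := by
  have hX : scl m G A ⊆ gcl m G A := hG.scl_subset_gcl hA (subset_gcl m G A) hA
  obtain ⟨γ, hγ⟩ := hG.exists_iso_eqOn (hG.scl_finite hA) (hG.selfSuff_scl hA)
    f.injective.injOn (fun a ha b hb => hf.adj_iff a (hX ha) b (hX hb))
    (hG.selfSuff_image_of_isAutOn (fun _ => hG.scl_subset_gcl hA) hf (hG.scl_finite hA) hX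
      (hG.selfSuff_scl hA))
  exact ⟨_, γ, hG.scl_finite hA, hG.selfSuff_scl hA, hG.subset_scl hA,
    hγ.mono inter_subset_left⟩

namespace SimpleGraph.Iso

variable {V : Type*} {G : SimpleGraph V}

theorem exists_eqOn_of_chain (γ : ℕ → G ≃g G) (B : ℕ → Set V) (hB : Monotone B)
    (hγ : ∀ n, EqOn (γ (n + 1)) (γ n) (B n)) (hdom : ∀ v, ∃ n, v ∈ B n)
    (hran : ∀ v, ∃ n, v ∈ γ n '' B n) : ∃ φ : G ≃g G, ∀ n, EqOn φ (γ n) (B n) := by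
  have hagree : ∀ {k n}, k ≤ n → EqOn (γ n) (γ k) (B k) := by
    intro k n hkn
    induction n, hkn using Nat.le_induction with
    | base => exact eqOn_refl _ _
    | succ n hkn ih => exact ((hγ n).mono (hB hkn)).trans ih
  choose N hN using hdom
  let φ : V → V := fun v => γ (N v) v
  have hφ : ∀ n, EqOn φ (γ n) (B n) := fun n v hv =>
    (hagree (le_max_left (N v) n) (hN v)).symm.trans (hagree (le_max_right (N v) n) hv)
  have hpair : ∀ a b, ∃ n, φ a = γ n a ∧ φ b = γ n b := fun a b =>
    ⟨max (N a) (N b), hφ _ (hB (le_max_left _ _) (hN a)), hφ _ (hB (le_max_right _ _) (hN b))⟩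
  have hinj : φ.Injective := fun a b hab => by
    obtain ⟨n, ha, hb⟩ := hpair a b
    exact (γ n).injective (ha ▸ hb ▸ hab)
  have hsurj : φ.Surjective := fun v => by
    obtain ⟨n, w, hw, rfl⟩ := hran v
    exact ⟨w, hφ n hw⟩
  refine ⟨⟨Equiv.ofBijective φ ⟨hinj, hsurj⟩, fun {a b} => ?_⟩, hφ⟩
  obtain ⟨n, ha, hb⟩ := hpair a b
  change G.Adj (φ a) (φ b) ↔ G.Adj a b
  rw [ha, hb]
  exact (γ n).map_adj_iff

theorem exists_of_back_and_forth [Countable V] (P : Set V → (G ≃g G) → Prop) {B₀ : Set V}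
    {γ₀ : G ≃g G} (h₀ : P B₀ γ₀)
    (hstep : ∀ B γ, P B γ → ∀ u,
      ∃ B' γ', P B' γ' ∧ B ⊆ B' ∧ EqOn γ' γ B ∧ u ∈ B' ∧ u ∈ γ' '' B') :
    ∃ φ : G ≃g G, ∀ v, ∃ B γ, P B γ ∧ v ∈ B ∧ φ v = γ v := by
  rcases isEmpty_or_nonempty V with hV | hV
  · exact ⟨RelIso.refl _, fun v => isEmptyElim v⟩
  obtain ⟨e, he⟩ := exists_surjective_nat V
  have hstep' : ∀ (p : {p : Set V × (G ≃g G) // P p.1 p.2}) (u : V),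
      ∃ q : {p : Set V × (G ≃g G) // P p.1 p.2}, p.1.1 ⊆ q.1.1 ∧ EqOn q.1.2 p.1.2 p.1.1 ∧
        u ∈ q.1.1 ∧ u ∈ q.1.2 '' q.1.1 := fun p u => by
    obtain ⟨B', γ', h', h⟩ := hstep p.1.1 p.1.2 p.2 u
    exact ⟨⟨(B', γ'), h'⟩, h⟩
  choose next hnext using hstep'
  let seq : ℕ → {p : Set V × (G ≃g G) // P p.1 p.2} := fun n =>
    Nat.rec ⟨(B₀, γ₀), h₀⟩ (fun k p => next p (e k)) n
  obtain ⟨φ, hφ⟩ := exists_eqOn_of_chain (fun n => (seq n).1.2) (fun n => (seq n).1.1)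
    (monotone_nat_of_le_succ fun n => (hnext (seq n) (e n)).1) (fun n => (hnext (seq n) (e n)).2.1)
    (fun v => (he v).elim fun n hn => ⟨n + 1, hn ▸ (hnext (seq n) (e n)).2.2.1⟩)
    (fun v => (he v).elim fun n hn => ⟨n + 1, hn ▸ (hnext (seq n) (e n)).2.2.2⟩)
  refine ⟨φ, fun v => ?_⟩
  obtain ⟨n, rfl⟩ := he v
  have hv := (hnext (seq n) (e n)).2.2.1
  exact ⟨_, _, (seq (n + 1)).2, hv, hφ (n + 1) hv⟩

end SimpleGraph.Iso

theorem IsGeneric.exists_iso_eqOn_gcl {V : Type} [Countable V] {m : ℕ} {G : SimpleGraph V}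
    (hG : IsGeneric m G) {A : Set V} (hA : A.Finite) {f : V ≃ V}
    (hf : IsAutOn G (gcl m G A) f) : ∃ γ : G ≃g G, EqOn γ f (gcl m G A) := by
  obtain ⟨B₀, γ₀, h₀⟩ := hG.exists_isApprox hA hf
  obtain ⟨φ, hφ⟩ := SimpleGraph.Iso.exists_of_back_and_forth (IsApprox m G A f) h₀
    fun _ _ h => h.exists_back_and_forth hG hA hf
  refine ⟨φ, fun v hv => ?_⟩
  obtain ⟨B, γ, h, hvB, hφv⟩ := hφ v
  exact hφv.trans (h.eqOn ⟨hvB, hv⟩)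

theorem extension_lemma_general (m : ℕ) (V : Type)
    [Countable V] (G : SimpleGraph V) (hG : IsGeneric m G)
    (A : Set V) (hA : A.Finite)
    (g : (G.induce (gcl m G A)) ≃g (G.induce (gcl m G A))) :
    ∃ γ : G ≃g G, ∀ x : ↥(gcl m G A), γ (x : V) = (g x : V) := by
  classical
  obtain ⟨γ, hγ⟩ := hG.exists_iso_eqOn_gcl hA g.isAutOn_ofSubtype
  exact ⟨γ, fun x => (hγ x.2).trans (Equiv.Perm.ofSubtype_apply_coe _ x)⟩

/-- Extension lemma: every automorphism of the induced subgraph on `X = gcl(A)`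
(`A` finite) extends to an automorphism of the generic graph `M`. -/
theorem extension_lemma (m : ℕ) (hm : 2 ≤ m) (V : Type)
    [Countable V] [Infinite V] (G : SimpleGraph V) (hG : IsGeneric m G)
    (A : Set V) (hA : A.Finite)
    (g : (G.induce (gcl m G A)) ≃g (G.induce (gcl m G A))) :
    ∃ γ : G ≃g G, ∀ x : ↥(gcl m G A), γ (x : V) = (g x : V) :=
  extension_lemma_general m V G hG A hA g
end
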